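/- arXiv:2310.09041 — 5 statements merged into one kernel-verified Lean document; each statement's English description precedes it below -/
import Mathlib

section
/- The normalization constants satisfy lim_{η→0⁺} 1/(η c_η) = −1/γ'(0). -/
open MeasureTheory Real Set Filter Topology

/-- A nonlocal kernel `γ : [0,∞) → [0,∞)` with fixed support, together with its
(one-sided) derivative `dγ` and second derivative `ddγ` on a neighborhood `(0,δ)` of zero,
satisfying Assumption 2.2 of the paper. -/
structure Kernel where
  γ : ℝ → ℝ
  dγ : ℝ → ℝ
  ddγ : ℝ → ℝ
  δ : ℝ
  δ_pos : 0 < δ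
  nonneg : ∀ x, 0 ≤ x → 0 ≤ γ x
  /-- `γ` is integrable on `(0,∞)` -/
  integrable : MeasureTheory.IntegrableOn γ (Set.Ioi 0)
  /-- `γ` has finite total variation on `(0,∞)` -/
  bv : BoundedVariationOn γ (Set.Ioi 0)
  /-- `γ` is differentiable on `[0,δ)` (one-sided at `0`) with derivative `dγ` -/
  deriv_Ico : ∀ x ∈ Set.Ico 0 δ, HasDerivWithinAt γ (dγ x) (Set.Ici 0) x
  /-- `dγ` is differentiable on `(0,δ)` with derivative `ddγ` -/
  deriv2_Ioo : ∀ x ∈ Set.Ioo 0 δ, HasDerivWithinAt dγ (ddγ x) (Set.Ioo 0 δ) x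
  /-- the second derivative is (essentially) bounded on `(0,δ)` -/
  ddγ_bdd : ∃ C, ∀ x ∈ Set.Ioo 0 δ, |ddγ x| ≤ C
  /-- negative derivative at zero -/
  dγ0_neg : dγ 0 < 0
  /-- upper bound on `(δ,∞)`: values near zero dominate the tail -/
  upper : ∀ x ∈ Set.Ioo 0 δ, ∀ y, δ < y → γ y ≤ γ x
  /-- strict monotonicity on `(0,δ)` -/
  dγ_neg : ∀ x ∈ Set.Ioo 0 δ, dγ x < 0
  /-- normalization -/
  γ0 : γ 0 = 1

/-- The normalization constant `c_η = (∫₀^∞ γ(y)^{1/η} dy)⁻¹`. -/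
noncomputable def Kernel.c (K : Kernel) (η : ℝ) : ℝ :=
  (∫ y in Set.Ioi (0:ℝ), K.γ y ^ (1/η))⁻¹

/-- The scaled kernel `γ_η(x) = c_η γ(x)^{1/η}` (power scaling). -/
noncomputable def Kernel.γη (K : Kernel) (η x : ℝ) : ℝ := K.c η * K.γ x ^ (1/η)

/-- The (a.e.) derivative of the scaled kernel: `γ_η'(x) = c_η (1/η) γ(x)^{1/η-1} γ'(x)`. -/
noncomputable def Kernel.dγη (K : Kernel) (η x : ℝ) : ℝ :=
  K.c η * (1/η) * K.γ x ^ (1/η - 1) * K.dγ x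

/-- Local absolute continuity of `γ` on `(0,∞)`: `γ` is a.e. differentiable with derivative
`dγ`, which is integrable with `∫₀^∞ |γ'| ≤ |γ|_{TV((0,∞))}`. -/
def Kernel.AC (K : Kernel) : Prop :=
  (∀ᵐ x ∂(MeasureTheory.volume.restrict (Set.Ioi (0:ℝ))), HasDerivAt K.γ (K.dγ x) x) ∧
    MeasureTheory.IntegrableOn K.dγ (Set.Ioi 0) ∧
    (∫ x in Set.Ioi (0:ℝ), |K.dγ x|) ≤ (eVariationOn K.γ (Set.Ioi 0)).toReal

/-- The nonlocal operator `W[q,γ](x) = ∫_x^∞ γ(y-x) q(y) dy` (at fixed time). -/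
noncomputable def Wop (γ : ℝ → ℝ) (q : ℝ → ℝ) (x : ℝ) : ℝ :=
  ∫ y in Set.Ioi x, γ (y - x) * q y

/-- The exponential surrogate nonlocal term `E(x) = (1/ν) ∫_x^∞ exp((x-y)/ν) q(y) dy`. -/
noncomputable def Eop (ν : ℝ) (q : ℝ → ℝ) (x : ℝ) : ℝ :=
  (1/ν) * ∫ y in Set.Ioi x, Real.exp ((x - y)/ν) * q y


open MeasureTheory Real Set Filter Topology

-- key pointwise inequality: for 0 ≤ x ≤ m and p ≥ 1, x^p ≤ m^(p-1) * x
lemma aux_rpow_le {x m p : ℝ} (hx : 0 ≤ x) (hxm : x ≤ m) (hp : 1 ≤ p) :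
    x ^ p ≤ m ^ (p - 1) * x := by
  rcases eq_or_lt_of_le hx with h0 | h0
  · rw [← h0, Real.zero_rpow (by linarith : p ≠ 0), mul_zero]
  · have h1 : x ^ (p - 1) * x ^ (1:ℝ) = x ^ p := by
      rw [← Real.rpow_add h0]; norm_num
    rw [Real.rpow_one] at h1
    rw [← h1]
    exact mul_le_mul_of_nonneg_right (Real.rpow_le_rpow h0.le hxm (by linarith)) h0.le

lemma integral_one_sub_mul_rpow {c d p : ℝ} (hc : 0 < c) (hd : 0 < d) (hcd : c * d < 1)
    (hp : 1 ≤ p) :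
    ∫ y in Set.Ioo (0:ℝ) d, (1 - c * y) ^ p
      = (1 - (1 - c * d) ^ (p + 1)) / (c * (p + 1)) := by
  have hpos : ∀ y ∈ Set.Icc (0:ℝ) d, 0 < 1 - c * y := by
    intro y hy
    nlinarith [mul_le_mul_of_nonneg_left hy.2 hc.le]
  have hF : ∀ y ∈ Set.uIcc (0:ℝ) d,
      HasDerivAt (fun y : ℝ => -((1 - c * y) ^ (p + 1) / (c * (p + 1))))
        ((1 - c * y) ^ p) y := by
    intro y hy
    rw [Set.uIcc_of_le hd.le] at hy
    have h1 : HasDerivAt (fun y : ℝ => 1 - c * y) (-c) y := by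
      simpa using ((hasDerivAt_id y).const_mul c).const_sub 1
    have h2 := (h1.rpow_const (p := p + 1) (Or.inr (by linarith)))
    have h3 := (h2.div_const (c * (p + 1))).neg
    refine h3.congr_deriv ?_
    have : p + 1 - 1 = p := by ring
    rw [this]
    field_simp
    try ring
  have hint : IntervalIntegrable (fun y : ℝ => (1 - c * y) ^ p) volume 0 d := by
    apply ContinuousOn.intervalIntegrable
    apply ContinuousOn.rpow_const
    · exact (continuous_const.sub (continuous_const.mul continuous_id)).continuousOn
    · intro y hy
      rw [Set.uIcc_of_le hd.le] at hy
      exact Or.inl (hpos y hy).ne'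
  rw [← MeasureTheory.integral_Ioc_eq_integral_Ioo, ← intervalIntegral.integral_of_le hd.le,
    intervalIntegral.integral_eq_sub_of_hasDerivAt hF hint]
  have h10 : (1 : ℝ) - c * 0 = 1 := by ring
  rw [h10, Real.one_rpow]
  field_simp
  ring

lemma tail_limit {m I : ℝ} (hm0 : 0 ≤ m) (hm1 : m < 1) :
    Tendsto (fun η : ℝ => 1 / η * m ^ (1 / η - 1) * I) (𝓝[>] (0:ℝ)) (𝓝 0) := by
  have key : Tendsto (fun t : ℝ => t * m ^ (t - 1) * I) atTop (𝓝 0) := by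
    rcases eq_or_lt_of_le hm0 with h0 | h0
    · apply Tendsto.congr' _ tendsto_const_nhds
      filter_upwards [eventually_gt_atTop 1] with t ht
      rw [← h0, Real.zero_rpow (by linarith : t - 1 ≠ 0)]
      ring
    · have hlogneg : Real.log m < 0 := Real.log_neg h0 hm1
      have base := tendsto_rpow_mul_exp_neg_mul_atTop_nhds_zero 1 (-Real.log m)
        (by linarith)
      have h2 : Tendsto (fun t : ℝ => (m⁻¹ * I) * (t ^ (1:ℝ) * Real.exp (-(-Real.log m) * t)))
          atTop (𝓝 0) := by
        simpa using base.const_mul (m⁻¹ * I)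
      apply Tendsto.congr' _ h2
      filter_upwards [eventually_gt_atTop 0] with t ht
      rw [Real.rpow_one]
      have hm : m ^ (t - 1) = m⁻¹ * Real.exp (Real.log m * t) := by
        rw [Real.rpow_def_of_pos h0]
        have : Real.log m * (t - 1) = Real.log m * t + (- Real.log m) := by ring
        rw [this, Real.exp_add, Real.exp_neg, Real.exp_log h0]
        ring
      rw [hm, neg_neg]
      ring
  have hcomp : Tendsto (fun η : ℝ => 1 / η) (𝓝[>] (0:ℝ)) atTop := by
    simpa [one_div] using tendsto_inv_nhdsGT_zero
  exact key.comp hcomp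
namespace Kernel
variable (K : Kernel)

lemma hasDerivAt_interior {x : ℝ} (hx : x ∈ Set.Ioo 0 K.δ) : HasDerivAt K.γ (K.dγ x) x :=
  (K.deriv_Ico x ⟨hx.1.le, hx.2⟩).hasDerivAt (Ici_mem_nhds hx.1)

lemma contOn : ContinuousOn K.γ (Set.Ico 0 K.δ) := fun x hx =>
  ((K.deriv_Ico x hx).continuousWithinAt).mono (fun y hy => hy.1)

lemma strictAnti : StrictAntiOn K.γ (Set.Ico 0 K.δ) := by
  apply strictAntiOn_of_deriv_neg (convex_Ico _ _) K.contOn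
  intro x hx
  rw [interior_Ico] at hx
  rw [(K.hasDerivAt_interior hx).deriv]
  exact K.dγ_neg x hx

lemma gamma_lt_one {x : ℝ} (hx : x ∈ Set.Ioo 0 K.δ) : K.γ x < 1 := by
  have := K.strictAnti ⟨le_rfl, K.δ_pos⟩ ⟨hx.1.le, hx.2⟩ hx.1
  rwa [K.γ0] at this

lemma tail_ae {s : ℝ} (hs : s ∈ Set.Ioo 0 K.δ) :
    ∀ᵐ y ∂(volume.restrict (Set.Ioi s)), K.γ y ≤ K.γ s := by
  rw [ae_restrict_iff' measurableSet_Ioi]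
  have hne : ∀ᵐ y : ℝ, y ≠ K.δ := by
    rw [ae_iff]
    simpa using (Real.volume_singleton (a := K.δ))
  filter_upwards [hne] with y hyne hy
  rcases lt_trichotomy y K.δ with h | h | h
  · exact (K.strictAnti ⟨hs.1.le, hs.2⟩ ⟨(hs.1.trans hy).le, h⟩ hy).le
  · exact absurd h hyne
  · exact K.upper s hs y h

lemma slope_bound {ε : ℝ} (hε : 0 < ε) :
    ∃ d, 0 < d ∧ d < K.δ ∧ ∀ x ∈ Set.Ioo 0 d,
      1 - (-K.dγ 0 + ε) * x ≤ K.γ x ∧ K.γ x ≤ 1 - (-K.dγ 0 - ε) * x := by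
  have h0 := K.deriv_Ico 0 ⟨le_rfl, K.δ_pos⟩
  rw [hasDerivWithinAt_iff_tendsto_slope, Set.Ici_sdiff_left] at h0
  have h1 := Metric.tendsto_nhds.mp h0 ε hε
  rw [eventually_nhdsWithin_iff, Metric.eventually_nhds_iff] at h1
  obtain ⟨r, hr, hball⟩ := h1
  refine ⟨min r K.δ / 2, by have := lt_min hr K.δ_pos; linarith, ?_, ?_⟩
  · have := min_le_right r K.δ
    linarith [K.δ_pos]
  · intro x hx
    have hxr : dist x 0 < r := by
      rw [Real.dist_eq, sub_zero, abs_of_pos hx.1]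
      have := min_le_left r K.δ
      have hx2 := hx.2
      linarith
    have := hball hxr hx.1
    rw [slope_def_field, K.γ0, sub_zero, Real.dist_eq] at this
    have habs := abs_lt.mp this
    have hx0 : (0:ℝ) < x := hx.1
    have hlow := (lt_div_iff₀ hx0).mp (by linarith [habs.1] : K.dγ 0 - ε < (K.γ x - 1) / x)
    have hup := (div_lt_iff₀ hx0).mp (by linarith [habs.2] : (K.γ x - 1) / x < K.dγ 0 + ε)
    constructor <;> nlinarith

end Kernel

namespace Kernel
variable (K : Kernel)

lemma aesm_rpow {p : ℝ} (hp : 0 ≤ p) {s : Set ℝ} (hs : s ⊆ Set.Ioi 0) :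
    AEStronglyMeasurable (fun y => K.γ y ^ p) (volume.restrict s) := by
  have h1 : AEMeasurable K.γ (volume.restrict (Set.Ioi 0)) :=
    K.integrable.aestronglyMeasurable.aemeasurable
  have h2 : AEMeasurable (fun y => K.γ y ^ p) (volume.restrict (Set.Ioi 0)) :=
    (Real.continuous_rpow_const hp).measurable.comp_aemeasurable h1
  exact (h2.mono_measure (Measure.restrict_mono hs le_rfl)).aestronglyMeasurable

lemma integrableOn_rpow {d p : ℝ} (hd : d ∈ Set.Ioo 0 K.δ) (hp : 1 ≤ p) :
    IntegrableOn (fun y => K.γ y ^ p) (Set.Ioi 0) := by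
  rw [← Set.Ioc_union_Ioi_eq_Ioi hd.1.le]
  apply MeasureTheory.IntegrableOn.union
  · refine ⟨K.aesm_rpow (by linarith) Set.Ioc_subset_Ioi_self, ?_⟩
    apply MeasureTheory.HasFiniteIntegral.restrict_of_bounded (C := 1) measure_Ioc_lt_top
    rw [ae_restrict_iff' measurableSet_Ioc]
    apply Filter.Eventually.of_forall
    intro y hy
    have hy0 : (0:ℝ) < y := hy.1
    have hγ1 : K.γ y ≤ 1 := (K.gamma_lt_one ⟨hy0, lt_of_le_of_lt hy.2 hd.2⟩).le
    rw [Real.norm_eq_abs, abs_of_nonneg (Real.rpow_nonneg (K.nonneg y hy0.le) p)]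
    exact Real.rpow_le_one (K.nonneg y hy0.le) hγ1 (by linarith)
  · apply MeasureTheory.Integrable.mono
      ((K.integrable.mono_set (Set.Ioi_subset_Ioi hd.1.le)).const_mul ((K.γ d) ^ (p - 1)))
      (K.aesm_rpow (by linarith) (Set.Ioi_subset_Ioi hd.1.le))
    filter_upwards [K.tail_ae hd, ae_restrict_mem measurableSet_Ioi] with y h1 h2
    have hy0 : 0 ≤ K.γ y := K.nonneg y (hd.1.trans h2).le
    rw [Real.norm_eq_abs, Real.norm_eq_abs, abs_of_nonneg (Real.rpow_nonneg hy0 p)]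
    exact le_trans (aux_rpow_le hy0 h1 hp) (le_abs_self _)

lemma tail_integral_le {d p : ℝ} (hd : d ∈ Set.Ioo 0 K.δ) (hp : 1 ≤ p) :
    ∫ y in Set.Ioi d, K.γ y ^ p ≤ (K.γ d) ^ (p - 1) * ∫ y in Set.Ioi d, K.γ y := by
  rw [← MeasureTheory.integral_const_mul]
  apply MeasureTheory.integral_mono_ae
    ((K.integrableOn_rpow hd hp).mono_set (Set.Ioi_subset_Ioi hd.1.le))
    ((K.integrable.mono_set (Set.Ioi_subset_Ioi hd.1.le)).const_mul _)
  filter_upwards [K.tail_ae hd, ae_restrict_mem measurableSet_Ioi] with y h1 h2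
  exact aux_rpow_le (K.nonneg y (hd.1.trans h2).le) h1 hp

end Kernel

set_option maxHeartbeats 1000000 in
/-- the normalization constants satisfy `lim_{η→0⁺} 1/(η c_η) = -1/γ'(0)`. -/
theorem limit_inv_eta_c_eta (K : Kernel) :
    Filter.Tendsto (fun η : ℝ => 1 / (η * K.c η)) (nhdsWithin 0 (Set.Ioi 0))
      (nhds (-1 / K.dγ 0)) := by
  have hA : 0 < -K.dγ 0 := neg_pos.mpr K.dγ0_neg
  have hL : -1 / K.dγ 0 = 1 / (-K.dγ 0) := by rw [neg_div, div_neg]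
  rw [hL, Metric.tendsto_nhds]
  intro ε hε
  -- choose ε' > 0 small enough
  obtain ⟨ε', hε'pos, h1a, h2b, hε'A⟩ :
      ∃ ε' : ℝ, ε' ∈ Set.Ioi (0:ℝ) ∧
        1 / (-K.dγ 0 - ε') < 1 / (-K.dγ 0) + ε ∧
        1 / (-K.dγ 0) - ε < 1 / (-K.dγ 0 + ε') ∧ ε' < -K.dγ 0 := by
    have hc1 : ContinuousAt (fun t : ℝ => 1 / (-K.dγ 0 - t)) 0 :=
      ContinuousAt.div continuousAt_const (continuousAt_const.sub continuousAt_id)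
        (by simpa using hA.ne')
    have hc2 : ContinuousAt (fun t : ℝ => 1 / (-K.dγ 0 + t)) 0 :=
      ContinuousAt.div continuousAt_const (continuousAt_const.add continuousAt_id)
        (by simpa using hA.ne')
    have E1 : ∀ᶠ t in 𝓝 (0:ℝ), 1 / (-K.dγ 0 - t) < 1 / (-K.dγ 0) + ε := by
      have h := hc1.tendsto
      rw [sub_zero] at h
      exact h.eventually (eventually_lt_nhds (by linarith))
    have E2 : ∀ᶠ t in 𝓝 (0:ℝ), 1 / (-K.dγ 0) - ε < 1 / (-K.dγ 0 + t) := by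
      have h := hc2.tendsto
      rw [add_zero] at h
      exact h.eventually (eventually_gt_nhds (by linarith))
    have E3 : ∀ᶠ t in 𝓝 (0:ℝ), t < -K.dγ 0 := eventually_lt_nhds hA
    exact (eventually_mem_nhdsWithin.and
      ((E1.and (E2.and E3)).filter_mono nhdsWithin_le_nhds)).exists
  rw [Set.mem_Ioi] at hε'pos
  set b := -K.dγ 0 + ε' with hbdef
  set a := -K.dγ 0 - ε' with hadef
  have ha : 0 < a := by rw [hadef]; linarith
  have hb : 0 < b := by rw [hbdef]; linarith
  have hab : a < b := by rw [hadef, hbdef]; linarith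
  obtain ⟨d, hd0, hdδ, hdbound⟩ := K.slope_bound hε'pos
  rw [← hbdef, ← hadef] at hdbound
  set d₀ := min d (1 / (2 * b)) with hd₀def
  clear_value b a d₀
  have hd₀d : d₀ ≤ d := by rw [hd₀def]; exact min_le_left _ _
  have hd₀r : d₀ ≤ 1 / (2 * b) := by rw [hd₀def]; exact min_le_right _ _
  have hd₀0 : 0 < d₀ := by rw [hd₀def]; exact lt_min hd0 (by positivity)
  have hd₀δ : d₀ < K.δ := lt_of_le_of_lt hd₀d hdδ
  have hd₀mem : d₀ ∈ Set.Ioo 0 K.δ := ⟨hd₀0, hd₀δ⟩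
  have hbd₀ : b * d₀ < 1 := by
    have h1 : b * d₀ ≤ b * (1 / (2 * b)) := mul_le_mul_of_nonneg_left hd₀r hb.le
    have h2 : b * (1 / (2 * b)) = 1 / 2 := by
      field_simp
    linarith
  have had₀ : a * d₀ < 1 := by nlinarith
  have hbound : ∀ x ∈ Set.Ioo 0 d₀, 1 - b * x ≤ K.γ x ∧ K.γ x ≤ 1 - a * x := fun x hx =>
    hdbound x ⟨hx.1, lt_of_lt_of_le hx.2 hd₀d⟩
  have hrb0 : 0 < 1 - b * d₀ := by linarith
  have hrb1 : 1 - b * d₀ < 1 := by nlinarith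
  have hra0 : 0 < 1 - a * d₀ := by linarith
  have hra1 : 1 - a * d₀ < 1 := by nlinarith
  -- the limits
  have T1 : Tendsto (fun η : ℝ => 1 / η + 1) (𝓝[>] (0:ℝ)) atTop := by
    have h2 : Tendsto (fun η : ℝ => 1 / η) (𝓝[>] (0:ℝ)) atTop := by
      simpa [one_div] using (tendsto_inv_nhdsGT_zero (𝕜 := ℝ))
    exact tendsto_atTop_add_const_right _ 1 h2
  have Trb : Tendsto (fun η : ℝ => (1 - b * d₀) ^ (1 / η + 1)) (𝓝[>] (0:ℝ)) (𝓝 0) :=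
    (tendsto_rpow_atTop_of_base_lt_one _ (by linarith) hrb1).comp T1
  have Tra : Tendsto (fun η : ℝ => (1 - a * d₀) ^ (1 / η + 1)) (𝓝[>] (0:ℝ)) (𝓝 0) :=
    (tendsto_rpow_atTop_of_base_lt_one _ (by linarith) hra1).comp T1
  have Tden_b : Tendsto (fun η : ℝ => b * (1 + η)) (𝓝[>] (0:ℝ)) (𝓝 b) := by
    have h : Tendsto (fun η : ℝ => b * (1 + η)) (𝓝 (0:ℝ)) (𝓝 (b * (1 + 0))) :=
      ((continuous_const.mul (continuous_const.add continuous_id)).tendsto 0)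
    simpa using h.mono_left nhdsWithin_le_nhds
  have Tden_a : Tendsto (fun η : ℝ => a * (1 + η)) (𝓝[>] (0:ℝ)) (𝓝 a) := by
    have h : Tendsto (fun η : ℝ => a * (1 + η)) (𝓝 (0:ℝ)) (𝓝 (a * (1 + 0))) :=
      ((continuous_const.mul (continuous_const.add continuous_id)).tendsto 0)
    simpa using h.mono_left nhdsWithin_le_nhds
  have Lowlim : Tendsto (fun η : ℝ => (1 - (1 - b * d₀) ^ (1 / η + 1)) / (b * (1 + η)))
      (𝓝[>] (0:ℝ)) (𝓝 (1 / b)) := by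
    have h := ((tendsto_const_nhds : Tendsto (fun _ : ℝ => (1:ℝ)) (𝓝[>] (0:ℝ)) (𝓝 1)).sub Trb).div Tden_b hb.ne'
    simpa [Pi.div_def] using h
  have Uplim : Tendsto (fun η : ℝ => (1 - (1 - a * d₀) ^ (1 / η + 1)) / (a * (1 + η)))
      (𝓝[>] (0:ℝ)) (𝓝 (1 / a)) := by
    have h := ((tendsto_const_nhds : Tendsto (fun _ : ℝ => (1:ℝ)) (𝓝[>] (0:ℝ)) (𝓝 1)).sub Tra).div Tden_a ha.ne'
    simpa [Pi.div_def] using h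
  have Tailim : Tendsto (fun η : ℝ => 1 / η * (K.γ d₀) ^ (1 / η - 1) *
      (∫ y in Set.Ioi d₀, K.γ y)) (𝓝[>] (0:ℝ)) (𝓝 0) :=
    tail_limit (K.nonneg d₀ hd₀0.le) (K.gamma_lt_one hd₀mem)
  have hEL : ∀ᶠ η in 𝓝[>] (0:ℝ),
      1 / (-K.dγ 0) - ε < (1 - (1 - b * d₀) ^ (1 / η + 1)) / (b * (1 + η)) :=
    Lowlim.eventually (eventually_gt_nhds h2b)
  have hEU : ∀ᶠ η in 𝓝[>] (0:ℝ),
      (1 - (1 - a * d₀) ^ (1 / η + 1)) / (a * (1 + η)) +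
        1 / η * (K.γ d₀) ^ (1 / η - 1) * (∫ y in Set.Ioi d₀, K.γ y)
        < 1 / (-K.dγ 0) + ε := by
    have h := Uplim.add Tailim
    rw [add_zero] at h
    exact h.eventually (eventually_lt_nhds h1a)
  have hη1 : ∀ᶠ η in 𝓝[>] (0:ℝ), η ∈ Set.Ioo (0:ℝ) 1 :=
    eventually_of_mem (Ioo_mem_nhdsGT_of_mem ⟨le_rfl, one_pos⟩) (fun _ h => h)
  filter_upwards [hEL, hEU, hη1] with η hEL hEU hη
  have hη0 : 0 < η := hη.1
  have hp1 : 1 < 1 / η := one_lt_one_div hη0 hη.2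
  have hp0 : 0 < 1 / η := by linarith
  -- integrability
  have hIoiInt := K.integrableOn_rpow hd₀mem hp1.le
  have hIoc : IntegrableOn (fun y => K.γ y ^ (1/η)) (Set.Ioc 0 d₀) :=
    hIoiInt.mono_set Set.Ioc_subset_Ioi_self
  have hIoi : IntegrableOn (fun y => K.γ y ^ (1/η)) (Set.Ioi d₀) :=
    hIoiInt.mono_set (Set.Ioi_subset_Ioi hd₀0.le)
  have hIoo : IntegrableOn (fun y => K.γ y ^ (1/η)) (Set.Ioo 0 d₀) :=
    hIoiInt.mono_set Set.Ioo_subset_Ioi_self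
  have hsplit : ∫ y in Set.Ioi (0:ℝ), K.γ y ^ (1/η)
      = (∫ y in Set.Ioo 0 d₀, K.γ y ^ (1/η)) + ∫ y in Set.Ioi d₀, K.γ y ^ (1/η) := by
    rw [← Set.Ioc_union_Ioi_eq_Ioi hd₀0.le,
      setIntegral_union Set.Ioc_disjoint_Ioi_same measurableSet_Ioi hIoc hIoi,
      MeasureTheory.integral_Ioc_eq_integral_Ioo]
  have hpoly : ∀ c : ℝ, 0 < c → c * d₀ < 1 →
      IntegrableOn (fun y : ℝ => (1 - c * y) ^ (1/η)) (Set.Ioo 0 d₀) := by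
    intro c hc hcd
    have hcont : ContinuousOn (fun y : ℝ => (1 - c * y) ^ (1/η)) (Set.Icc 0 d₀) := by
      apply ContinuousOn.rpow_const
      · exact (continuous_const.sub (continuous_const.mul continuous_id)).continuousOn
      · intro y hy
        exact Or.inr hp0.le
    exact (hcont.integrableOn_Icc).mono_set Set.Ioo_subset_Icc_self
  have Hlow : ∫ y in Set.Ioo 0 d₀, (1 - b * y) ^ (1/η)
      ≤ ∫ y in Set.Ioo 0 d₀, K.γ y ^ (1/η) := by
    apply setIntegral_mono_on (hpoly b hb hbd₀) hIoo measurableSet_Ioo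
    intro y hy
    apply Real.rpow_le_rpow _ (hbound y hy).1 hp0.le
    nlinarith [hy.1, hy.2]
  have Hup : ∫ y in Set.Ioo 0 d₀, K.γ y ^ (1/η)
      ≤ ∫ y in Set.Ioo 0 d₀, (1 - a * y) ^ (1/η) := by
    apply setIntegral_mono_on hIoo (hpoly a ha had₀) measurableSet_Ioo
    intro y hy
    exact Real.rpow_le_rpow (K.nonneg y hy.1.le) (hbound y hy).2 hp0.le
  have Jb := integral_one_sub_mul_rpow hb hd₀0 hbd₀ hp1.le
  have Ja := integral_one_sub_mul_rpow ha hd₀0 had₀ hp1.le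
  have Tup := K.tail_integral_le hd₀mem hp1.le
  have Tnonneg : 0 ≤ ∫ y in Set.Ioi d₀, K.γ y ^ (1/η) :=
    setIntegral_nonneg measurableSet_Ioi
      (fun y hy => Real.rpow_nonneg (K.nonneg y (hd₀0.trans hy).le) _)
  have Ilow : (1 - (1 - b * d₀) ^ (1/η + 1)) / (b * (1/η + 1))
      ≤ ∫ y in Set.Ioi (0:ℝ), K.γ y ^ (1/η) := by
    rw [hsplit, ← Jb]
    linarith
  have Ipos : 0 < ∫ y in Set.Ioi (0:ℝ), K.γ y ^ (1/η) := by
    apply lt_of_lt_of_le _ Ilow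
    apply div_pos _ (by positivity)
    have := Real.rpow_lt_one hrb0.le hrb1 (by linarith : (0:ℝ) < 1/η + 1)
    linarith
  have hcη : K.c η = (∫ y in Set.Ioi (0:ℝ), K.γ y ^ (1/η))⁻¹ := rfl
  have hgη : 1 / (η * K.c η) = 1/η * ∫ y in Set.Ioi (0:ℝ), K.γ y ^ (1/η) := by
    rw [hcη, one_div, mul_inv, inv_inv, ← one_div]
  rw [hgη, Real.dist_eq, abs_sub_lt_iff]
  have hc4 : ∀ c : ℝ, 0 < c →
      (1 - (1 - c * d₀) ^ (1/η + 1)) / (c * (1 + η))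
        = 1/η * ((1 - (1 - c * d₀) ^ (1/η + 1)) / (c * (1/η + 1))) := by
    intro c hc
    have h1 : η ≠ 0 := hη0.ne'
    have h2 : c ≠ 0 := hc.ne'
    field_simp
    try ring
  constructor
  · have c1 : 1/η * (∫ y in Set.Ioi (0:ℝ), K.γ y ^ (1/η))
        ≤ 1/η * (∫ y in Set.Ioo 0 d₀, (1 - a * y) ^ (1/η))
          + 1/η * ((K.γ d₀) ^ (1/η - 1) * ∫ y in Set.Ioi d₀, K.γ y) := by
      rw [hsplit, mul_add]
      exact add_le_add (mul_le_mul_of_nonneg_left Hup hp0.le)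
        (mul_le_mul_of_nonneg_left Tup hp0.le)
    rw [Ja, ← hc4 a ha] at c1
    have c3 : 1/η * ((K.γ d₀) ^ (1/η - 1) * ∫ y in Set.Ioi d₀, K.γ y)
        = 1/η * (K.γ d₀) ^ (1/η - 1) * ∫ y in Set.Ioi d₀, K.γ y := by ring
    rw [c3] at c1
    linarith
  · have c5 : 1/η * ((1 - (1 - b * d₀) ^ (1/η + 1)) / (b * (1/η + 1)))
        ≤ 1/η * ∫ y in Set.Ioi (0:ℝ), K.γ y ^ (1/η) :=
      mul_le_mul_of_nonneg_left Ilow hp0.le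
    rw [← hc4 b hb] at c5
    linarith
end

section
/- For real numbers g < 0, α ≥ 0 and L ≥ 0 one has lim_{η→0⁺} [((1 + η^{3/4} g + η^{3/2} α/2)^{1/η + 1} − 1) / ((g + (α/2) η^{3/4})(1 + η)) + (1 + η^{3/4} g + η^{3/2} α/2)^{1/η − 1} · L] = −1/g. -/
open Filter Topology Real

/-- for real numbers `g < 0`, `α ≥ 0` and `L ≥ 0`,
`lim_{η→0⁺} [((1 + η^{3/4} g + η^{3/2} α/2)^{1/η+1} - 1)/((g + (α/2)η^{3/4})(1+η))
  + (1 + η^{3/4} g + η^{3/2} α/2)^{1/η-1} · L] = -1/g`, with real powers. -/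
theorem limit_upper_bound_expression (g a L : ℝ) (hg : g < 0) (ha : 0 ≤ a) (hL : 0 ≤ L) :
    Filter.Tendsto
      (fun η : ℝ =>
        ((1 + η ^ ((3:ℝ)/4) * g + η ^ ((3:ℝ)/2) * a / 2) ^ (1/η + 1) - 1) /
          ((g + a/2 * η ^ ((3:ℝ)/4)) * (1 + η))
        + (1 + η ^ ((3:ℝ)/4) * g + η ^ ((3:ℝ)/2) * a / 2) ^ (1/η - 1) * L)
      (nhdsWithin 0 (Set.Ioi 0)) (nhds (-1 / g)) := by
  set b : ℝ → ℝ := fun η => 1 + η ^ ((3:ℝ)/4) * g + η ^ ((3:ℝ)/2) * a / 2 with hbdef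
  have h34 : Tendsto (fun η : ℝ => η ^ ((3:ℝ)/4)) (𝓝[>] (0:ℝ)) (𝓝 0) := by
    have := (Real.continuousAt_rpow_const 0 ((3:ℝ)/4) (Or.inr (by norm_num))).tendsto.mono_left
      (nhdsWithin_le_nhds (s := Set.Ioi (0:ℝ)))
    simpa [Real.zero_rpow (show ((3:ℝ)/4) ≠ 0 by norm_num)] using this
  have h32 : Tendsto (fun η : ℝ => η ^ ((3:ℝ)/2)) (𝓝[>] (0:ℝ)) (𝓝 0) := by
    have := (Real.continuousAt_rpow_const 0 ((3:ℝ)/2) (Or.inr (by norm_num))).tendsto.mono_left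
      (nhdsWithin_le_nhds (s := Set.Ioi (0:ℝ)))
    simpa [Real.zero_rpow (show ((3:ℝ)/2) ≠ 0 by norm_num)] using this
  have hb : Tendsto b (𝓝[>] (0:ℝ)) (𝓝 1) := by
    have : Tendsto b (𝓝[>] (0:ℝ)) (𝓝 (1 + 0 * g + 0 * a / 2)) :=
      ((tendsto_const_nhds.add (h34.mul_const g)).add ((h32.mul_const a).div_const 2))
    simpa using this
  -- eventualities
  have E1 : ∀ᶠ η : ℝ in 𝓝[>] (0:ℝ), 0 < η := self_mem_nhdsWithin
  have E2 : ∀ᶠ η : ℝ in 𝓝[>] (0:ℝ), η < 1/2 :=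
    (eventually_lt_nhds (by norm_num : (0:ℝ) < 1/2)).filter_mono nhdsWithin_le_nhds
  have E3 : ∀ᶠ η : ℝ in 𝓝[>] (0:ℝ), η ^ ((3:ℝ)/4) * (a/2) ≤ -g/2 := by
    have h : Tendsto (fun η : ℝ => η ^ ((3:ℝ)/4) * (a/2)) (𝓝[>] (0:ℝ)) (𝓝 0) := by
      simpa using h34.mul_const (a/2)
    have : ∀ᶠ x : ℝ in 𝓝 (0:ℝ), x < -g/2 := eventually_lt_nhds (by linarith)
    filter_upwards [h.eventually this] with η hη using hη.le
  have E4 : ∀ᶠ η : ℝ in 𝓝[>] (0:ℝ), 0 < b η :=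
    hb.eventually (eventually_gt_nhds (by norm_num))
  -- the key lemma
  have key : ∀ c : ℝ, -1 ≤ c → Tendsto (fun η => b η ^ (1/η + c)) (𝓝[>] (0:ℝ)) (𝓝 0) := by
    intro c hc
    have hbot : Tendsto (fun η : ℝ => (1/η + c) * Real.log (b η)) (𝓝[>] (0:ℝ)) atBot := by
      have hbound : Tendsto (fun η : ℝ => η ^ (-(1:ℝ)/4) * (g/4)) (𝓝[>] (0:ℝ)) atBot := by
        have h14 : Tendsto (fun η : ℝ => η ^ ((1:ℝ)/4)) (𝓝[>] (0:ℝ)) (𝓝[>] (0:ℝ)) := by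
          have h0 : Tendsto (fun η : ℝ => η ^ ((1:ℝ)/4)) (𝓝[>] (0:ℝ)) (𝓝 0) := by
            have := (Real.continuousAt_rpow_const 0 ((1:ℝ)/4) (Or.inr (by norm_num))).tendsto.mono_left
              (nhdsWithin_le_nhds (s := Set.Ioi (0:ℝ)))
            simpa [Real.zero_rpow (show ((1:ℝ)/4) ≠ 0 by norm_num)] using this
          refine tendsto_nhdsWithin_of_tendsto_nhds_of_eventually_within _ h0 ?_
          filter_upwards [E1] with η hη using Real.rpow_pos_of_pos hη _
        have hinv : Tendsto (fun η : ℝ => (η ^ ((1:ℝ)/4))⁻¹) (𝓝[>] (0:ℝ)) atTop :=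
          tendsto_inv_nhdsGT_zero.comp h14
        have hneg : Tendsto (fun η : ℝ => η ^ (-(1:ℝ)/4)) (𝓝[>] (0:ℝ)) atTop := by
          refine hinv.congr' ?_
          filter_upwards [E1] with η hη
          rw [show (-(1:ℝ)/4) = -((1:ℝ)/4) by norm_num, Real.rpow_neg hη.le]
        exact hneg.atTop_mul_const_of_neg (by linarith : g/4 < 0)
      refine tendsto_atBot_mono' _ ?_ hbound
      filter_upwards [E1, E2, E3, E4] with η hη1 hη2 hη3 hη4
      have hp34 : (0:ℝ) < η ^ ((3:ℝ)/4) := Real.rpow_pos_of_pos hη1 _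
      have hlog1 : Real.log (b η) ≤ b η - 1 := Real.log_le_sub_one_of_pos hη4
      have hsq : η ^ ((3:ℝ)/2) = η ^ ((3:ℝ)/4) * η ^ ((3:ℝ)/4) := by
        rw [← Real.rpow_add hη1]; norm_num
      have hlog2 : Real.log (b η) ≤ η ^ ((3:ℝ)/4) * (g/2) := by
        have h1 : b η - 1 = η ^ ((3:ℝ)/4) * g + η ^ ((3:ℝ)/4) * (η ^ ((3:ℝ)/4) * (a/2)) := by
          simp only [hbdef]; rw [hsq]; ring
        have h2 : η ^ ((3:ℝ)/4) * (η ^ ((3:ℝ)/4) * (a/2)) ≤ η ^ ((3:ℝ)/4) * (-g/2) :=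
          mul_le_mul_of_nonneg_left hη3 hp34.le
        calc Real.log (b η) ≤ b η - 1 := hlog1
          _ ≤ η ^ ((3:ℝ)/4) * g + η ^ ((3:ℝ)/4) * (-g/2) := by rw [h1]; linarith
          _ = η ^ ((3:ℝ)/4) * (g/2) := by ring
      have hlogneg : Real.log (b η) ≤ 0 := by nlinarith
      have hcoef : 1/(2*η) ≤ 1/η + c := by
        rw [div_add' _ _ _ hη1.ne', div_le_div_iff₀ (by linarith) hη1]
        nlinarith [mul_nonneg (by linarith : (0:ℝ) ≤ c + 1) (mul_pos hη1 hη1).le, mul_pos hη1 hη1]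
      have hpow : η ^ (-(1:ℝ)/4) = η ^ ((3:ℝ)/4) / η := by
        rw [show (-(1:ℝ)/4) = (3:ℝ)/4 - 1 by norm_num, Real.rpow_sub hη1, Real.rpow_one]
      calc (1/η + c) * Real.log (b η) ≤ (1/(2*η)) * Real.log (b η) :=
            mul_le_mul_of_nonpos_right hcoef hlogneg
        _ ≤ (1/(2*η)) * (η ^ ((3:ℝ)/4) * (g/2)) :=
            mul_le_mul_of_nonneg_left hlog2 (by positivity)
        _ = η ^ (-(1:ℝ)/4) * (g/4) := by rw [hpow]; ring
    have := Real.tendsto_exp_atBot.comp hbot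
    refine this.congr' ?_
    filter_upwards [E4] with η hη4
    rw [Function.comp_apply, Real.rpow_def_of_pos hη4, mul_comm]
  -- assemble
  have hden : Tendsto (fun η : ℝ => (g + a/2 * η ^ ((3:ℝ)/4)) * (1 + η)) (𝓝[>] (0:ℝ))
      (𝓝 ((g + a/2 * 0) * (1 + 0))) := by
    exact (tendsto_const_nhds.add (h34.const_mul (a/2))).mul
      (tendsto_const_nhds.add (tendsto_id.mono_left nhdsWithin_le_nhds))
  have hfrac : Tendsto (fun η : ℝ => (b η ^ (1/η + 1) - 1) /
      ((g + a/2 * η ^ ((3:ℝ)/4)) * (1 + η))) (𝓝[>] (0:ℝ)) (𝓝 ((0 - 1) / ((g + a/2 * 0) * (1 + 0)))) :=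
    ((key 1 (by norm_num)).sub_const 1).div hden (by simp [hg.ne])
  have hsecond : Tendsto (fun η : ℝ => b η ^ (1/η - 1) * L) (𝓝[>] (0:ℝ)) (𝓝 (0 * L)) := by
    refine Tendsto.mul_const L ?_
    refine (key (-1) le_rfl).congr (fun η => ?_)
    rw [← sub_eq_add_neg]
  have := hfrac.add hsecond
  convert this using 2
  simp only [add_zero, mul_zero, zero_mul, zero_sub, mul_one]
end

section
/- There exist a constant C > 0 depending only on γ and η̄ ∈ (0, 1/4] such that for every η ∈ (0, η̄), every M ≥ 0, and every bounded continuous q : ℝ → [0, 2M]: sup_{x∈ℝ} |W[q,γ_η](x) − E(x)| ≤ C η M, where ν := −η/γ'(0), W[q,γ_η](x) := ∫_x^∞ γ_η(y−x) q(y) dy and E(x) := (1/ν) ∫_x^∞ exp((x−y)/ν) q(y) dy. -/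
open MeasureTheory Real Set Filter Topology

lemma exp_sub_exp_abs_le (x y : ℝ) :
    |Real.exp x - Real.exp y| ≤ |x - y| * Real.exp (max x y) := by
  wlog h : y ≤ x generalizing x y
  · rw [abs_sub_comm, abs_sub_comm x y, max_comm]
    exact this _ _ (le_of_not_ge h)
  rw [abs_of_nonneg (sub_nonneg.2 (Real.exp_le_exp.2 h)),
    abs_of_nonneg (sub_nonneg.2 h), max_eq_left h]
  have h1 := Real.add_one_le_exp (y - x)
  have h3 : Real.exp x * Real.exp (y - x) = Real.exp y := by
    rw [← Real.exp_add]; ring_nf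
  nlinarith [Real.exp_pos x, Real.exp_pos y]

lemma exp_neg_le_four_div_sq {T : ℝ} (hT : 0 < T) : Real.exp (-T) ≤ 4 / T ^ 2 := by
  have h1 := Real.add_one_le_exp (T / 2)
  have h2 : Real.exp (T / 2) * Real.exp (T / 2) = Real.exp T := by
    rw [← Real.exp_add]; ring_nf
  have h3 : T ^ 2 / 4 ≤ Real.exp T := by nlinarith
  have h4 : Real.exp (-T) = 1 / Real.exp T := by
    rw [Real.exp_neg]; ring
  rw [h4]
  rw [div_le_div_iff₀ (Real.exp_pos T) (by positivity)]
  nlinarith [Real.exp_pos T]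

lemma shift_integral (g : ℝ → ℝ) (x : ℝ) :
    ∫ y in Ioi x, g (y - x) = ∫ z in Ioi (0:ℝ), g z := by
  have key : ∀ y : ℝ, (Ioi x).indicator (fun y => g (y - x)) y
      = (Ioi 0).indicator g (y - x) := by
    intro y
    by_cases hy : y ∈ Ioi x
    · rw [indicator_of_mem hy, indicator_of_mem (by simpa [sub_pos] using hy)]
    · rw [indicator_of_notMem hy, indicator_of_notMem (by simpa [sub_pos] using hy)]
  rw [← integral_indicator measurableSet_Ioi, ← integral_indicator measurableSet_Ioi]
  simp_rw [key]
  exact integral_sub_right_eq_self ((Ioi (0:ℝ)).indicator g) x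

lemma shift_integrableOn {g : ℝ → ℝ} (hg : IntegrableOn g (Ioi 0)) (x : ℝ) :
    IntegrableOn (fun y => g (y - x)) (Ioi x) := by
  have key : ∀ y : ℝ, (Ioi x).indicator (fun y => g (y - x)) y
      = (Ioi 0).indicator g (y - x) := by
    intro y
    by_cases hy : y ∈ Ioi x
    · rw [indicator_of_mem hy, indicator_of_mem (by simpa [sub_pos] using hy)]
    · rw [indicator_of_notMem hy, indicator_of_notMem (by simpa [sub_pos] using hy)]
  have h1 : Integrable ((Ioi (0:ℝ)).indicator g) := by
    rwa [integrable_indicator_iff measurableSet_Ioi]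
  have h2 := h1.comp_sub_right x
  have h3 : Integrable ((Ioi x).indicator (fun y => g (y - x))) :=
    h2.congr (Filter.Eventually.of_forall fun y => (key y).symm)
  exact (integrable_indicator_iff measurableSet_Ioi).mp h3

lemma integral_exp_neg_mul_Ioi0 {c : ℝ} (hc : 0 < c) :
    ∫ z in Ioi (0:ℝ), Real.exp (-(c * z)) = 1 / c := by
  have h := Real.integral_rpow_mul_exp_neg_mul_Ioi (a := 1) one_pos hc
  simp only [sub_self, Real.rpow_zero, one_mul, Real.rpow_one, Real.Gamma_one, mul_one] at h
  simpa using h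

lemma integrableOn_exp_neg_mul_Ioi {c : ℝ} (hc : 0 < c) (x : ℝ) :
    IntegrableOn (fun z => Real.exp (-(c * z))) (Ioi x) := by
  have := exp_neg_integrableOn_Ioi x hc
  simpa [neg_mul] using this

lemma integral_sq_mul_exp_neg_mul_Ioi0 {c : ℝ} (hc : 0 < c) :
    ∫ z in Ioi (0:ℝ), z ^ 2 * Real.exp (-(c * z)) = 2 / c ^ 3 := by
  have h := Real.integral_rpow_mul_exp_neg_mul_Ioi (a := 3) (by norm_num) hc
  have e1 : ∀ t : ℝ, t ∈ Ioi (0:ℝ) → t ^ ((3:ℝ) - 1) * Real.exp (-(c * t))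
      = t ^ 2 * Real.exp (-(c * t)) := by
    intro t ht
    congr 1
    rw [show (3:ℝ) - 1 = ((2:ℕ):ℝ) by norm_num, Real.rpow_natCast]
  rw [setIntegral_congr_fun measurableSet_Ioi e1] at h
  rw [h]
  have hΓ : Real.Gamma 3 = 2 := by
    rw [show (3:ℝ) = ((2:ℕ):ℝ) + 1 by norm_num, Real.Gamma_nat_eq_factorial]
    norm_num
  rw [hΓ, show (1/c : ℝ) ^ (3:ℝ) = (1/c) ^ ((3:ℕ):ℝ) by norm_num, Real.rpow_natCast]
  field_simp

lemma integrableOn_sq_mul_exp_neg_mul {c : ℝ} (hc : 0 < c) :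
    IntegrableOn (fun z => z ^ 2 * Real.exp (-(c * z))) (Ioi 0) := by
  have h := integrableOn_rpow_mul_exp_neg_mul_rpow (s := 2) (p := 1) (b := c)
    (by norm_num) one_pos hc
  refine h.congr_fun (fun z hz => ?_) measurableSet_Ioi
  dsimp only
  rw [Real.rpow_one, show (2:ℝ) = ((2:ℕ):ℝ) by norm_num, Real.rpow_natCast, neg_mul]

lemma Kernel.cont_Ico (K : Kernel) : ContinuousOn K.γ (Ico 0 K.δ) :=
  fun x hx => ((K.deriv_Ico x hx).continuousWithinAt).mono (fun y hy => hy.1)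

lemma Kernel.hasDerivAt_Ioo (K : Kernel) {x : ℝ} (hx : x ∈ Ioo 0 K.δ) :
    HasDerivAt K.γ (K.dγ x) x :=
  (K.deriv_Ico x ⟨hx.1.le, hx.2⟩).hasDerivAt (Ici_mem_nhds hx.1)

lemma Kernel.strictAnti_s9 (K : Kernel) : StrictAntiOn K.γ (Ico 0 K.δ) := by
  apply strictAntiOn_of_deriv_neg (convex_Ico 0 K.δ) K.cont_Ico
  intro x hx
  rw [interior_Ico] at hx
  rw [(K.hasDerivAt_Ioo hx).deriv]
  exact K.dγ_neg x hx

lemma Kernel.γ_le_one (K : Kernel) {z : ℝ} (hz : 0 < z) (hne : z ≠ K.δ) : K.γ z ≤ 1 := by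
  have hδ := K.δ_pos
  have hmem0 : (0:ℝ) ∈ Ico (0:ℝ) K.δ := ⟨le_rfl, hδ⟩
  rcases lt_or_gt_of_ne hne with h | h
  · have := K.strictAnti_s9 hmem0 ⟨hz.le, h⟩ hz
    rw [K.γ0] at this; exact this.le
  · have hmemh : K.δ/2 ∈ Ico (0:ℝ) K.δ := ⟨by linarith, by linarith⟩
    have h2 := K.upper (K.δ/2) ⟨by linarith, by linarith⟩ z h
    have h3 : K.γ (K.δ/2) < 1 := by
      have := K.strictAnti_s9 hmem0 hmemh (by linarith : (0:ℝ) < K.δ/2)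
      rwa [K.γ0] at this
    linarith

lemma Kernel.ae_ne_δ (K : Kernel) {s : Set ℝ} :
    ∀ᵐ z ∂(volume.restrict s), z ≠ K.δ := by
  refine ae_restrict_of_ae ?_
  rw [ae_iff]
  have : {a : ℝ | ¬ a ≠ K.δ} = {K.δ} := by ext a; simp
  rw [this]
  exact Real.volume_singleton

lemma Kernel.rpow_integrable (K : Kernel) {p : ℝ} (hp : 1 ≤ p) :
    IntegrableOn (fun z => K.γ z ^ p) (Ioi 0) := by
  have hmeas : AEStronglyMeasurable (fun z => K.γ z ^ p) (volume.restrict (Ioi 0)) :=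
    (K.integrable.aestronglyMeasurable.aemeasurable.pow_const p).aestronglyMeasurable
  apply Integrable.mono K.integrable hmeas
  filter_upwards [K.ae_ne_δ, ae_restrict_mem measurableSet_Ioi] with z hzδ hz
  rw [Real.norm_eq_abs, Real.norm_eq_abs]
  have h0 : 0 ≤ K.γ z := K.nonneg z (le_of_lt hz)
  rw [abs_of_nonneg (Real.rpow_nonneg h0 p), abs_of_nonneg h0]
  rcases eq_or_lt_of_le h0 with h | h
  · rw [← h, Real.zero_rpow (by positivity : p ≠ 0)]
  · calc K.γ z ^ p ≤ K.γ z ^ (1:ℝ) :=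
        Real.rpow_le_rpow_of_exponent_ge h (K.γ_le_one hz hzδ) hp
      _ = K.γ z := Real.rpow_one _

lemma Kernel.dγ_lip (K : Kernel) {Cd : ℝ} (hCd : ∀ x ∈ Ioo 0 K.δ, |K.ddγ x| ≤ Cd)
    {u z : ℝ} (hu : u ∈ Ioo 0 K.δ) (hz : z ∈ Ioo 0 K.δ) :
    |K.dγ z - K.dγ u| ≤ Cd * |z - u| := by
  have h := Convex.norm_image_sub_le_of_norm_hasDerivWithin_le
    (f := K.dγ) (f' := K.ddγ) (s := Ioo 0 K.δ) (C := Cd)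
    (fun x hx => K.deriv2_Ioo x hx)
    (fun x hx => by rw [Real.norm_eq_abs]; exact hCd x hx)
    (convex_Ioo 0 K.δ) hu hz
  simpa [Real.norm_eq_abs] using h

lemma Kernel.taylor1 (K : Kernel) {Cd : ℝ} (hCd : ∀ x ∈ Ioo 0 K.δ, |K.ddγ x| ≤ Cd)
    (hCd0 : 0 ≤ Cd) {z : ℝ} (hz : z ∈ Ioo 0 K.δ) :
    |K.γ z - 1 - K.dγ z * z| ≤ Cd * z ^ 2 := by
  obtain ⟨hz0, hzδ⟩ := hz
  have main : ∀ w ∈ Ioo (0:ℝ) z,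
      |(K.γ z - K.dγ z * z) - (K.γ w - K.dγ z * w)| ≤ Cd * z ^ 2 := by
    intro w hw
    have hsub : Icc w z ⊆ Ioo 0 K.δ := fun t ht => ⟨lt_of_lt_of_le hw.1 ht.1,
      lt_of_le_of_lt ht.2 hzδ⟩
    have h := Convex.norm_image_sub_le_of_norm_hasDerivWithin_le
      (f := fun t => K.γ t - K.dγ z * t) (f' := fun t => K.dγ t - K.dγ z)
      (s := Icc w z) (C := Cd * z)
      (fun t ht => by
        have h1 : HasDerivWithinAt K.γ (K.dγ t) (Icc w z) t :=
          (K.deriv_Ico t ⟨(hsub ht).1.le, (hsub ht).2⟩).mono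
            (fun y hy => le_trans hw.1.le hy.1)
        have h2 : HasDerivWithinAt (fun t : ℝ => K.dγ z * t) (K.dγ z) (Icc w z) t := by
          simpa using ((hasDerivAt_id t).const_mul (K.dγ z)).hasDerivWithinAt
        exact h1.sub h2)
      (fun t ht => by
        rw [Real.norm_eq_abs]
        have := K.dγ_lip hCd ⟨hz0, hzδ⟩ (hsub ht)
        calc |K.dγ t - K.dγ z| ≤ Cd * |t - z| := this
          _ ≤ Cd * z := by
            apply mul_le_mul_of_nonneg_left _ hCd0
            rw [abs_of_nonpos (by linarith [ht.2])]
            linarith [(hsub ht).1, ht.2])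
      (convex_Icc w z) ⟨le_rfl, hw.2.le⟩ ⟨hw.2.le, le_rfl⟩
    rw [Real.norm_eq_abs, Real.norm_eq_abs] at h
    calc |(K.γ z - K.dγ z * z) - (K.γ w - K.dγ z * w)| ≤ Cd * z * |z - w| := h
      _ ≤ Cd * z ^ 2 := by
        rw [abs_of_nonneg (by linarith [hw.1, hw.2] : (0:ℝ) ≤ z - w)]
        have hzw : z - w ≤ z := by linarith [hw.1]
        have : Cd * z * (z - w) ≤ Cd * z * z :=
          mul_le_mul_of_nonneg_left hzw (mul_nonneg hCd0 hz0.le)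
        nlinarith
  have h1 : Tendsto K.γ (𝓝[>] 0) (𝓝 1) := by
    have cw := (K.deriv_Ico 0 ⟨le_rfl, K.δ_pos⟩).continuousWithinAt
    have := cw.tendsto.mono_left (nhdsWithin_mono (0:ℝ) Ioi_subset_Ici_self)
    rwa [K.γ0] at this
  have hw : Tendsto (fun w : ℝ => K.γ w - K.dγ z * w) (𝓝[>] 0) (𝓝 1) := by
    have h2 : Tendsto (fun w : ℝ => K.dγ z * w) (𝓝[>] 0) (𝓝 0) := by
      have hc : Continuous (fun w : ℝ => K.dγ z * w) := continuous_const.mul continuous_id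
      have := (hc.tendsto 0).mono_left (nhdsWithin_le_nhds (s := Ioi (0:ℝ)))
      simpa using this
    simpa using h1.sub h2
  have h2 : Tendsto (fun w => |(K.γ z - K.dγ z * z) - (K.γ w - K.dγ z * w)|) (𝓝[>] 0)
      (𝓝 |(K.γ z - K.dγ z * z) - 1|) := (tendsto_const_nhds.sub hw).abs
  have h3 : |(K.γ z - K.dγ z * z) - 1| ≤ Cd * z ^ 2 := by
    refine le_of_tendsto h2 ?_
    filter_upwards [Ioo_mem_nhdsGT_of_mem ⟨le_rfl, hz0⟩] with w hww
    exact main w hww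
  calc |K.γ z - 1 - K.dγ z * z| = |(K.γ z - K.dγ z * z) - 1| := by ring_nf
    _ ≤ Cd * z ^ 2 := h3

lemma Kernel.dγ_tendsto (K : Kernel) {Cd : ℝ} (hCd : ∀ x ∈ Ioo 0 K.δ, |K.ddγ x| ≤ Cd)
    (hCd0 : 0 ≤ Cd) : Tendsto K.dγ (𝓝[>] 0) (𝓝 (K.dγ 0)) := by
  have hslope : Tendsto (fun u => (K.γ u - 1) / u) (𝓝[>] (0:ℝ)) (𝓝 (K.dγ 0)) := by
    have h := hasDerivWithinAt_iff_tendsto_slope.1 (K.deriv_Ico 0 ⟨le_rfl, K.δ_pos⟩)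
    have hmono : 𝓝[>] (0:ℝ) ≤ 𝓝[Ici 0 \ {0}] (0:ℝ) :=
      nhdsWithin_mono _ (fun u hu => ⟨mem_Ici.2 (le_of_lt hu), ne_of_gt hu⟩)
    have h2 := h.mono_left hmono
    refine h2.congr (fun u => ?_)
    rw [slope_def_field, K.γ0, sub_zero]
  have hdiff : Tendsto (fun u => K.dγ u - (K.γ u - 1) / u) (𝓝[>] (0:ℝ)) (𝓝 0) := by
    apply squeeze_zero_norm' (a := fun u => Cd * u)
    · filter_upwards [Ioo_mem_nhdsGT_of_mem ⟨le_rfl, K.δ_pos⟩] with u hu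
      have ht := K.taylor1 hCd hCd0 hu
      rw [Real.norm_eq_abs]
      have hu0 : (0:ℝ) < u := hu.1
      have : K.dγ u - (K.γ u - 1) / u = -((K.γ u - 1 - K.dγ u * u) / u) := by
        field_simp; ring
      rw [this, abs_neg, abs_div, abs_of_pos hu0, div_le_iff₀ hu0]
      calc |K.γ u - 1 - K.dγ u * u| ≤ Cd * u ^ 2 := ht
        _ = Cd * u * u := by ring
    · have hc : Continuous (fun u : ℝ => Cd * u) := continuous_const.mul continuous_id
      have := (hc.tendsto 0).mono_left (nhdsWithin_le_nhds (s := Ioi (0:ℝ)))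
      simpa using this
  have := hslope.add hdiff
  rw [add_zero] at this
  refine this.congr (fun u => by ring)

lemma Kernel.dγ_close (K : Kernel) {Cd : ℝ} (hCd : ∀ x ∈ Ioo 0 K.δ, |K.ddγ x| ≤ Cd)
    (hCd0 : 0 ≤ Cd) {z : ℝ} (hz : z ∈ Ioo 0 K.δ) : |K.dγ z - K.dγ 0| ≤ Cd * z := by
  have h2 : Tendsto (fun u => |K.dγ z - K.dγ u|) (𝓝[>] (0:ℝ)) (𝓝 |K.dγ z - K.dγ 0|) :=
    (tendsto_const_nhds.sub (K.dγ_tendsto hCd hCd0)).abs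
  refine le_of_tendsto h2 ?_
  filter_upwards [Ioo_mem_nhdsGT_of_mem ⟨le_rfl, hz.1⟩] with u hu
  have h := K.dγ_lip hCd ⟨hu.1, lt_trans hu.2 hz.2⟩ hz
  calc |K.dγ z - K.dγ u| ≤ Cd * |z - u| := h
    _ ≤ Cd * z := by
      apply mul_le_mul_of_nonneg_left _ hCd0
      rw [abs_of_nonneg (by linarith [hu.2] : (0:ℝ) ≤ z - u)]
      linarith [hu.1]

lemma Kernel.taylor (K : Kernel) {Cd : ℝ} (hCd : ∀ x ∈ Ioo 0 K.δ, |K.ddγ x| ≤ Cd)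
    (hCd0 : 0 ≤ Cd) {z : ℝ} (hz : z ∈ Ioo 0 K.δ) :
    |K.γ z - 1 - K.dγ 0 * z| ≤ 2 * Cd * z ^ 2 := by
  have h1 := K.taylor1 hCd hCd0 hz
  have h2 := K.dγ_close hCd hCd0 hz
  have e : K.γ z - 1 - K.dγ 0 * z = (K.γ z - 1 - K.dγ z * z) + (K.dγ z - K.dγ 0) * z := by
    ring
  rw [e]
  calc |(K.γ z - 1 - K.dγ z * z) + (K.dγ z - K.dγ 0) * z|
      ≤ |K.γ z - 1 - K.dγ z * z| + |(K.dγ z - K.dγ 0) * z| := abs_add_le _ _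
    _ ≤ Cd * z ^ 2 + Cd * z * z := by
        refine add_le_add h1 ?_
        rw [abs_mul, abs_of_pos hz.1]
        exact mul_le_mul_of_nonneg_right h2 hz.1.le
    _ = 2 * Cd * z ^ 2 := by ring


set_option maxHeartbeats 2000000 in
lemma Kernel.key (K : Kernel) : ∃ C1 > (0:ℝ), ∀ p : ℝ, 4 ≤ p →
    (∫ z in Ioi (0:ℝ), |K.γ z ^ p - Real.exp (-(-K.dγ 0 * p * z))|) ≤ C1 / p ^ 2 := by
  obtain ⟨Cd0, hCd0'⟩ := K.ddγ_bdd
  obtain ⟨Cd, hCd, hCdnn⟩ : ∃ Cd, (∀ x ∈ Ioo 0 K.δ, |K.ddγ x| ≤ Cd) ∧ (0:ℝ) ≤ Cd :=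
    ⟨max Cd0 0, fun x hx => le_trans (hCd0' x hx) (le_max_left _ _), le_max_right _ _⟩
  obtain ⟨a, ha_def⟩ : ∃ x : ℝ, x = -K.dγ 0 := ⟨_, rfl⟩
  have ha : 0 < a := by rw [ha_def]; linarith [K.dγ0_neg]
  have hδ := K.δ_pos
  obtain ⟨K1, hK1_def⟩ : ∃ x : ℝ, x = a + 2*Cd*K.δ := ⟨_, rfl⟩
  have hK1 : 0 < K1 := by rw [hK1_def]; nlinarith
  obtain ⟨B0, hB0_def⟩ : ∃ x : ℝ, x = 2*Cd + 2*K1^2 := ⟨_, rfl⟩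
  have hB0 : 0 < B0 := by rw [hB0_def]; nlinarith
  obtain ⟨r, hr_def⟩ : ∃ x : ℝ, x = (1/2) * min K.δ (min (a/(2*B0)) (1/(2*K1))) := ⟨_, rfl⟩
  have hr0 : 0 < r := by
    have h1 : 0 < a/(2*B0) := by positivity
    have h2 : 0 < (1:ℝ)/(2*K1) := by positivity
    have h3 := lt_min hδ (lt_min h1 h2)
    rw [hr_def]
    nlinarith [h3]
  have hrδ : r < K.δ := by
    have h1 : min K.δ (min (a/(2*B0)) (1/(2*K1))) ≤ K.δ := min_le_left _ _
    rw [hr_def]; linarith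
  have hr1 : r ≤ a/(4*B0) := by
    have h1 : min K.δ (min (a/(2*B0)) (1/(2*K1))) ≤ a/(2*B0) :=
      le_trans (min_le_right _ _) (min_le_left _ _)
    rw [hr_def, show a/(4*B0) = (1/2) * (a/(2*B0)) by ring]
    linarith
  have hr2 : r ≤ 1/(4*K1) := by
    have h1 : min K.δ (min (a/(2*B0)) (1/(2*K1))) ≤ 1/(2*K1) :=
      le_trans (min_le_right _ _) (min_le_right _ _)
    rw [hr_def, show (1:ℝ)/(4*K1) = (1/2) * (1/(2*K1)) by ring]
    linarith
  have htay : ∀ z ∈ Ioo 0 K.δ, |K.γ z - 1 + a * z| ≤ 2*Cd*z^2 := by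
    intro z hz
    have h := K.taylor hCd hCdnn hz
    rw [show K.γ z - 1 - K.dγ 0 * z = K.γ z - 1 + a * z by rw [ha_def]; ring] at h
    exact h
  -- Taylor estimates on (0, r]
  have hF : ∀ z ∈ Ioc (0:ℝ) r, 1/2 ≤ K.γ z ∧ |Real.log (K.γ z) + a*z| ≤ B0 * z^2 := by
    intro z hz
    have hzIoo : z ∈ Ioo 0 K.δ := ⟨hz.1, lt_of_le_of_lt hz.2 hrδ⟩
    have ht := htay z hzIoo
    have hz0 : 0 < z := hz.1
    have hu : |K.γ z - 1| ≤ K1 * z := by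
      rw [show K.γ z - 1 = (K.γ z - 1 + a*z) - a*z by ring]
      refine le_trans (abs_sub _ _) ?_
      rw [abs_of_pos (by positivity : 0 < a*z)]
      have hzd : z < K.δ := hzIoo.2
      have h2 : 2*Cd*z^2 ≤ 2*Cd*K.δ*z := by
        nlinarith [mul_nonneg hCdnn (mul_nonneg hz0.le (sub_nonneg.2 hzd.le))]
      rw [hK1_def]; nlinarith
    have huq : K1 * z ≤ 1/4 := by
      have hzr : z ≤ r := hz.2
      have h2 : K1 * z ≤ K1 * (1/(4*K1)) :=
        mul_le_mul_of_nonneg_left (le_trans hzr hr2) hK1.le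
      have h3 : K1 * (1/(4*K1)) = 1/4 := by field_simp
      linarith
    have hu4 : |K.γ z - 1| ≤ 1/4 := le_trans hu huq
    have habs := abs_le.1 hu4
    have hγhalf : (1:ℝ)/2 ≤ K.γ z := by linarith [habs.1]
    refine ⟨hγhalf, ?_⟩
    set u := K.γ z - 1 with hu_def
    have hlt : |(-u)| < 1 := by rw [abs_neg]; linarith [hu4]
    have h := Real.abs_log_sub_add_sum_range_le hlt 1
    simp only [Finset.sum_range_one, pow_one, Nat.cast_zero, zero_add, div_one] at h
    have e1 : (1:ℝ) - -u = K.γ z := by rw [hu_def]; ring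
    rw [e1] at h
    -- h : |-u + log (K.γ z)| ≤ |-u| ^ 2 / (1 - |-u|)
    simp only [abs_neg] at h
    have h2 : |Real.log (K.γ z) - u| ≤ u^2 / (1 - |u|) := by
      rw [show Real.log (K.γ z) - u = -u + Real.log (K.γ z) by ring]
      calc |-u + Real.log (K.γ z)| ≤ |u| ^ (1+1) / (1 - |u|) := h
        _ = u^2 / (1 - |u|) := by norm_num [sq_abs]
    have hu4' : |u| ≤ 1/4 := hu4
    have h3 : u^2 / (1 - |u|) ≤ 2*u^2 := by
      rw [div_le_iff₀ (by linarith [hu4'] : (0:ℝ) < 1 - |u|)]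
      nlinarith [sq_nonneg u, abs_nonneg u]
    have h4 : |Real.log (K.γ z) - u| ≤ 2*u^2 := le_trans h2 h3
    have h5 : u^2 ≤ (K1*z)^2 := by
      have hab := abs_le.1 hu
      exact sq_le_sq' hab.1 hab.2
    calc |Real.log (K.γ z) + a*z| = |(Real.log (K.γ z) - u) + (u + a*z)| := by ring_nf
      _ ≤ |Real.log (K.γ z) - u| + |u + a*z| := abs_add_le _ _
      _ ≤ 2*u^2 + 2*Cd*z^2 := by
          refine add_le_add h4 ?_
          rw [hu_def]
          exact ht
      _ ≤ 2*(K1*z)^2 + 2*Cd*z^2 := by nlinarith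
      _ = B0 * z^2 := by rw [hB0_def]; ring
  -- pointwise bound on the head region
  have hpt : ∀ p : ℝ, 4 ≤ p → ∀ z ∈ Ioc (0:ℝ) r,
      |K.γ z ^ p - Real.exp (-(a*p*z))| ≤ p*B0*(z^2 * Real.exp (-(a*p/2*z))) := by
    intro p hp z hz
    obtain ⟨hγhalf, hlog⟩ := hF z hz
    have hγpos : 0 < K.γ z := by linarith
    have hp0 : (0:ℝ) < p := by linarith
    have hz0 : 0 < z := hz.1
    have hBz : B0 * z ≤ a/4 := by
      have h1 : B0 * z ≤ B0 * r := mul_le_mul_of_nonneg_left hz.2 hB0.le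
      have h2 : B0 * r ≤ B0 * (a/(4*B0)) := mul_le_mul_of_nonneg_left hr1 hB0.le
      have h3 : B0 * (a/(4*B0)) = a/4 := by field_simp
      linarith
    rw [Real.rpow_def_of_pos hγpos]
    refine le_trans (exp_sub_exp_abs_le _ _) ?_
    have hd : |Real.log (K.γ z) * p - -(a*p*z)| ≤ p * (B0*z^2) := by
      rw [show Real.log (K.γ z) * p - -(a*p*z) = p * (Real.log (K.γ z) + a*z) by ring,
        abs_mul, abs_of_pos hp0]
      exact mul_le_mul_of_nonneg_left hlog hp0.le
    have hmax : max (Real.log (K.γ z) * p) (-(a*p*z)) ≤ -(a*p/2*z) := by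
      apply max_le
      · have h1 : Real.log (K.γ z) ≤ -(a*z) + B0*z^2 := by
          have := (abs_le.1 hlog).2; linarith
        have h2 : B0*z^2 ≤ a/4*z := by nlinarith
        have h4 : 0 < a*z := mul_pos ha hz0
        have h3 : Real.log (K.γ z) ≤ -(a/2*z) := by nlinarith
        calc Real.log (K.γ z) * p ≤ (-(a/2*z))*p := mul_le_mul_of_nonneg_right h3 hp0.le
          _ = -(a*p/2*z) := by ring
      · nlinarith [mul_pos (mul_pos ha hp0) hz0]
    calc |Real.log (K.γ z) * p - -(a*p*z)| * Real.exp (max (Real.log (K.γ z) * p) (-(a*p*z)))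
        ≤ p * (B0*z^2) * Real.exp (-(a*p/2*z)) := by
          refine mul_le_mul hd (Real.exp_le_exp.2 hmax) (Real.exp_pos _).le (by positivity)
      _ = p*B0*(z^2 * Real.exp (-(a*p/2*z))) := by ring
  -- tail constants
  obtain ⟨s, hs_def⟩ : ∃ x : ℝ, x = K.γ r := ⟨_, rfl⟩
  have hs_half : (1:ℝ)/2 ≤ s := by rw [hs_def]; exact (hF r ⟨hr0, le_rfl⟩).1
  have hs_pos : 0 < s := by linarith
  have hs1 : s < 1 := by
    have h := K.strictAnti_s9 ⟨le_rfl, hδ⟩ ⟨hr0.le, hrδ⟩ hr0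
    rw [K.γ0] at h; rw [hs_def]; exact h
  obtain ⟨L, hL_def⟩ : ∃ x : ℝ, x = -Real.log s := ⟨_, rfl⟩
  have hLpos : 0 < L := by
    have h := Real.log_neg hs_pos hs1
    rw [hL_def]; linarith
  obtain ⟨G, hG_def⟩ : ∃ x : ℝ, x = ∫ z in Ioi (0:ℝ), K.γ z := ⟨_, rfl⟩
  have hG0 : 0 ≤ G := by
    rw [hG_def]
    exact setIntegral_nonneg measurableSet_Ioi (fun z hz => K.nonneg z (le_of_lt hz))
  refine ⟨16*B0/a^3 + 16*G/L^2 + 32/(a^3*r^2), by positivity, ?_⟩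
  intro p hp
  have hp0 : (0:ℝ) < p := by linarith
  have hap : 0 < a*p := by positivity
  have hint_rpow : IntegrableOn (fun z => K.γ z ^ p) (Ioi 0) := K.rpow_integrable (by linarith)
  have hint_exp : IntegrableOn (fun z => Real.exp (-(a*p*z))) (Ioi (0:ℝ)) :=
    integrableOn_exp_neg_mul_Ioi hap 0
  have hint_diff : IntegrableOn (fun z => |K.γ z ^ p - Real.exp (-(a*p*z))|) (Ioi 0) :=
    (hint_rpow.sub hint_exp).abs
  have hsplit : (∫ z in Ioi (0:ℝ), |K.γ z ^ p - Real.exp (-(a*p*z))|)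
      = (∫ z in Ioc (0:ℝ) r, |K.γ z ^ p - Real.exp (-(a*p*z))|)
        + (∫ z in Ioi r, |K.γ z ^ p - Real.exp (-(a*p*z))|) := by
    rw [← setIntegral_union (Ioc_disjoint_Ioi le_rfl) measurableSet_Ioi
      (hint_diff.mono_set Ioc_subset_Ioi_self) (hint_diff.mono_set (Ioi_subset_Ioi hr0.le)),
      Ioc_union_Ioi_eq_Ioi hr0.le]
  have hintg : IntegrableOn (fun z => p*B0*(z^2*Real.exp (-(a*p/2*z)))) (Ioi (0:ℝ)) :=
    (integrableOn_sq_mul_exp_neg_mul (by positivity : (0:ℝ) < a*p/2)).const_mul _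
  have hhead : (∫ z in Ioc (0:ℝ) r, |K.γ z ^ p - Real.exp (-(a*p*z))|) ≤ 16*B0/(a^3*p^2) := by
    calc (∫ z in Ioc (0:ℝ) r, |K.γ z ^ p - Real.exp (-(a*p*z))|)
        ≤ ∫ z in Ioc (0:ℝ) r, p*B0*(z^2*Real.exp (-(a*p/2*z))) :=
          setIntegral_mono_on (hint_diff.mono_set Ioc_subset_Ioi_self)
            (hintg.mono_set Ioc_subset_Ioi_self) measurableSet_Ioc (fun z hz => hpt p hp z hz)
      _ ≤ ∫ z in Ioi (0:ℝ), p*B0*(z^2*Real.exp (-(a*p/2*z))) :=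
          setIntegral_mono_set hintg
            (Filter.Eventually.of_forall (fun z => by positivity))
            (HasSubset.Subset.eventuallyLE Ioc_subset_Ioi_self)
      _ = p*B0*(2/(a*p/2)^3) := by
          rw [MeasureTheory.integral_const_mul,
            integral_sq_mul_exp_neg_mul_Ioi0 (by positivity : (0:ℝ) < a*p/2)]
      _ = 16*B0/(a^3*p^2) := by field_simp; ring
  have htail1 : (∫ z in Ioi r, K.γ z ^ p) ≤ 16*G/(L^2*p^2) := by
    have hsp : s ^ (p-1) ≤ 16/(L^2*p^2) := by
      rw [Real.rpow_def_of_pos hs_pos, show Real.log s * (p-1) = -((p-1)*L) by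
        rw [hL_def]; ring]
      have hT : 0 < (p-1)*L := by nlinarith
      refine le_trans (exp_neg_le_four_div_sq hT) ?_
      rw [div_le_div_iff₀ (by positivity) (by positivity)]
      have h1 : p ≤ 2*(p-1) := by linarith
      nlinarith [sq_nonneg L, sq_nonneg (p-2), mul_pos hLpos hLpos, sq_nonneg (L*(p-2))]
    have hmono : ∀ᵐ z ∂(volume.restrict (Ioi r)), K.γ z ^ p ≤ s^(p-1) * K.γ z := by
      filter_upwards [K.ae_ne_δ, ae_restrict_mem measurableSet_Ioi] with z hzδ hz
      have hz0 : (0:ℝ) < z := lt_trans hr0 hz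
      have hγnn : 0 ≤ K.γ z := K.nonneg z hz0.le
      rcases eq_or_lt_of_le hγnn with h0 | h0
      · rw [← h0, Real.zero_rpow (by positivity : p ≠ 0), mul_zero]
      · have hγs : K.γ z ≤ s := by
          rcases lt_or_gt_of_ne hzδ with hlt | hgt
          · have := K.strictAnti_s9 ⟨hr0.le, hrδ⟩ ⟨hz0.le, hlt⟩ hz
            rw [hs_def]; linarith
          · rw [hs_def]; exact K.upper r ⟨hr0, hrδ⟩ z hgt
        have e1 : K.γ z ^ p = K.γ z ^ (p-1) * K.γ z := by
          have h2 := Real.rpow_add h0 (p-1) 1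
          rw [sub_add_cancel, Real.rpow_one] at h2
          exact h2
        rw [e1]
        exact mul_le_mul (Real.rpow_le_rpow hγnn hγs (by linarith)) le_rfl hγnn
          (Real.rpow_nonneg hs_pos.le _)
    calc (∫ z in Ioi r, K.γ z ^ p) ≤ ∫ z in Ioi r, s^(p-1) * K.γ z :=
        integral_mono_ae (hint_rpow.mono_set (Ioi_subset_Ioi hr0.le))
          ((K.integrable.mono_set (Ioi_subset_Ioi hr0.le)).const_mul _) hmono
      _ = s^(p-1) * ∫ z in Ioi r, K.γ z := MeasureTheory.integral_const_mul _ _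
      _ ≤ s^(p-1) * G := by
          refine mul_le_mul_of_nonneg_left ?_ (Real.rpow_nonneg hs_pos.le _)
          rw [hG_def]
          exact setIntegral_mono_set K.integrable
            ((ae_restrict_mem measurableSet_Ioi).mono (fun z hz => K.nonneg z (le_of_lt hz)))
            ((Ioi_subset_Ioi hr0.le).eventuallyLE)
      _ ≤ (16/(L^2*p^2)) * G := mul_le_mul_of_nonneg_right hsp hG0
      _ = 16*G/(L^2*p^2) := by ring
  have htail2 : (∫ z in Ioi r, Real.exp (-(a*p*z))) ≤ 32/(a^3*r^2*p^2) := by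
    have hhalf : (0:ℝ) < a*p/2 := by positivity
    calc (∫ z in Ioi r, Real.exp (-(a*p*z)))
        ≤ ∫ z in Ioi r, Real.exp (-(a*p/2*r)) * Real.exp (-(a*p/2*z)) := by
          refine setIntegral_mono_on (hint_exp.mono_set (Ioi_subset_Ioi hr0.le))
            ((integrableOn_exp_neg_mul_Ioi hhalf r).const_mul _) measurableSet_Ioi
            (fun z hz => ?_)
          rw [← Real.exp_add]
          apply Real.exp_le_exp.2
          have hrz : r < z := hz
          nlinarith
      _ = Real.exp (-(a*p/2*r)) * ∫ z in Ioi r, Real.exp (-(a*p/2*z)) :=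
          MeasureTheory.integral_const_mul _ _
      _ ≤ Real.exp (-(a*p/2*r)) * ∫ z in Ioi (0:ℝ), Real.exp (-(a*p/2*z)) := by
          refine mul_le_mul_of_nonneg_left ?_ (Real.exp_pos _).le
          exact setIntegral_mono_set (integrableOn_exp_neg_mul_Ioi hhalf 0)
            (Filter.Eventually.of_forall (fun z => (Real.exp_pos _).le))
            ((Ioi_subset_Ioi hr0.le).eventuallyLE)
      _ = Real.exp (-(a*p/2*r)) * (1/(a*p/2)) := by rw [integral_exp_neg_mul_Ioi0 hhalf]
      _ ≤ (4/(a*p/2*r)^2) * (1/(a*p/2)) := by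
          refine mul_le_mul_of_nonneg_right (exp_neg_le_four_div_sq (by positivity)) ?_
          positivity
      _ = 32/(a^3*r^2*p^3) := by field_simp; ring
      _ ≤ 32/(a^3*r^2*p^2) := by
          rw [div_le_div_iff₀ (by positivity) (by positivity)]
          have h5 : p^2 ≤ p^3 := by nlinarith
          have h6 : (0:ℝ) < a^3*r^2 := by positivity
          nlinarith [mul_le_mul_of_nonneg_left h5 h6.le]
  have htail : (∫ z in Ioi r, |K.γ z ^ p - Real.exp (-(a*p*z))|)
      ≤ 16*G/(L^2*p^2) + 32/(a^3*r^2*p^2) := by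
    calc (∫ z in Ioi r, |K.γ z ^ p - Real.exp (-(a*p*z))|)
        ≤ ∫ z in Ioi r, (K.γ z ^ p + Real.exp (-(a*p*z))) := by
          refine setIntegral_mono_on (hint_diff.mono_set (Ioi_subset_Ioi hr0.le))
            ((hint_rpow.mono_set (Ioi_subset_Ioi hr0.le)).add
              (hint_exp.mono_set (Ioi_subset_Ioi hr0.le))) measurableSet_Ioi
            (fun z hz => ?_)
          have h1 : 0 ≤ K.γ z ^ p :=
            Real.rpow_nonneg (K.nonneg z (le_of_lt (lt_trans hr0 hz))) p
          have h2 := (Real.exp_pos (-(a*p*z))).le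
          refine le_trans (abs_sub _ _) ?_
          rw [abs_of_nonneg h1, abs_of_nonneg h2]
      _ = (∫ z in Ioi r, K.γ z ^ p) + (∫ z in Ioi r, Real.exp (-(a*p*z))) :=
          integral_add (hint_rpow.mono_set (Ioi_subset_Ioi hr0.le))
            (hint_exp.mono_set (Ioi_subset_Ioi hr0.le))
      _ ≤ 16*G/(L^2*p^2) + 32/(a^3*r^2*p^2) := add_le_add htail1 htail2
  have hfinal : (∫ z in Ioi (0:ℝ), |K.γ z ^ p - Real.exp (-(a*p*z))|)
      ≤ (16*B0/a^3 + 16*G/L^2 + 32/(a^3*r^2)) / p^2 := by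
    rw [hsplit]
    have heq : 16*B0/(a^3*p^2) + (16*G/(L^2*p^2) + 32/(a^3*r^2*p^2))
        = (16*B0/a^3 + 16*G/L^2 + 32/(a^3*r^2))/p^2 := by
      field_simp
      ring
    linarith
  have hagree : ∀ z : ℝ, Real.exp (-(a * p * z)) = Real.exp (-(-K.dγ 0 * p * z)) := by
    intro z; rw [ha_def]
  simp_rw [hagree] at hfinal
  exact hfinal

set_option maxHeartbeats 2000000 in
/-- Lemma 6.5, `L∞` estimate between `W_η` and its surrogate `E_η`: there
exist `C > 0` depending only on `γ` and `η̄ ∈ (0,1/4]` such that for every `η ∈ (0,η̄)`,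
every `M ≥ 0` and every bounded continuous `q : ℝ → [0,2M]`:
`sup_x |W[q,γ_η](x) - E(x)| ≤ C η M`, where `ν = -η/γ'(0)`. -/
theorem W_E_Linfty_estimate (K : Kernel) (hK : K.AC) :
    ∃ C > (0:ℝ), ∃ ηbar ∈ Set.Ioc (0:ℝ) (1/4), ∀ η ∈ Set.Ioo (0:ℝ) ηbar,
      ∀ M : ℝ, 0 ≤ M → ∀ q : ℝ → ℝ, Continuous q → (∀ x, q x ∈ Set.Icc 0 (2*M)) →
        ∀ x : ℝ, |Wop (K.γη η) q x - Eop (-η / K.dγ 0) q x| ≤ C * η * M := by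
  obtain ⟨C1, hC1, hkey⟩ := K.key
  obtain ⟨a, ha_def⟩ : ∃ x : ℝ, x = -K.dγ 0 := ⟨_, rfl⟩
  have ha : 0 < a := by rw [ha_def]; linarith [K.dγ0_neg]
  refine ⟨8*a*C1, by positivity, min (1/4) (1/(2*a*C1+1)),
    ⟨lt_min (by norm_num) (by positivity), min_le_left _ _⟩, ?_⟩
  intro η hη M hM q hq hqb x
  have hη0 : 0 < η := hη.1
  obtain ⟨p, hp_def⟩ : ∃ y : ℝ, y = 1/η := ⟨_, rfl⟩
  have hη4 : η < 1/4 := lt_of_lt_of_le hη.2 (min_le_left _ _)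
  have hηC : η < 1/(2*a*C1+1) := lt_of_lt_of_le hη.2 (min_le_right _ _)
  have hp4 : 4 ≤ p := by
    have h1 : 4 < 1/η := by rw [lt_div_iff₀ hη0]; linarith
    rw [hp_def]; linarith
  have hp0 : (0:ℝ) < p := by linarith
  have hpC : 2*a*C1 ≤ p := by
    have h2 : 0 < 2*a*C1+1 := by positivity
    have h1 : 2*a*C1+1 < 1/η := by
      rw [lt_div_iff₀ hη0]
      calc (2*a*C1+1)*η < (2*a*C1+1)*(1/(2*a*C1+1)) :=
          mul_lt_mul_of_pos_left hηC h2
        _ = 1 := by field_simp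
    rw [hp_def]; linarith
  have hap : 0 < a*p := by positivity
  have hηp : η = 1/p := by rw [hp_def]; field_simp
  -- L¹ distance between γ^p and the exponential
  have hJ : (∫ z in Ioi (0:ℝ), |K.γ z ^ p - Real.exp (-(a*p*z))|) ≤ C1/p^2 := by
    have h := hkey p hp4
    have he : ∀ z:ℝ, Real.exp (-(-K.dγ 0 * p * z)) = Real.exp (-(a*p*z)) := fun z => by
      rw [ha_def]
    simp_rw [he] at h; exact h
  obtain ⟨I, hI_def⟩ : ∃ y : ℝ, y = ∫ z in Ioi (0:ℝ), K.γ z ^ p := ⟨_, rfl⟩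
  have hIe : (∫ z in Ioi (0:ℝ), Real.exp (-(a*p*z))) = 1/(a*p) :=
    integral_exp_neg_mul_Ioi0 hap
  have hint_rpow := K.rpow_integrable (show (1:ℝ) ≤ p by linarith)
  have hint_exp : IntegrableOn (fun z => Real.exp (-(a*p*z))) (Ioi (0:ℝ)) :=
    integrableOn_exp_neg_mul_Ioi hap 0
  have hIclose : |I - 1/(a*p)| ≤ C1/p^2 := by
    rw [hI_def, ← hIe, ← integral_sub hint_rpow hint_exp]
    refine le_trans ?_ hJ
    have h := norm_integral_le_integral_norm (μ := volume.restrict (Ioi (0:ℝ)))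
      (f := fun z => K.γ z ^ p - Real.exp (-(a*p*z)))
    simpa [Real.norm_eq_abs] using h
  have hIlow : 1/(2*(a*p)) ≤ I := by
    have h1 : C1/p^2 ≤ 1/(2*(a*p)) := by
      rw [div_le_div_iff₀ (by positivity) (by positivity)]
      nlinarith
    have h2 := (abs_le.1 hIclose).1
    have h3 : 1/(2*(a*p)) = (1/2)*(1/(a*p)) := by ring
    linarith
  have hIpos : 0 < I := lt_of_lt_of_le (by positivity) hIlow
  have hIinv : I⁻¹ ≤ 2*(a*p) := by
    rw [← one_div, div_le_iff₀ hIpos]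
    have h5 : 2*(a*p)*(1/(2*(a*p))) = 1 := by field_simp
    nlinarith [mul_le_mul_of_nonneg_left hIlow (le_of_lt (by positivity : (0:ℝ) < 2*(a*p)))]
  have hIdiff : |I⁻¹ - a*p| ≤ 2*a^2*C1 := by
    have e1 : I⁻¹ - a*p = (1 - a*p*I)/I := by field_simp
    rw [e1, abs_div, abs_of_pos hIpos, div_le_iff₀ hIpos]
    have h1 : |1 - a*p*I| = a*p*|1/(a*p) - I| := by
      rw [show (1:ℝ) - a*p*I = a*p*(1/(a*p) - I) by field_simp, abs_mul, abs_of_pos hap]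
    have h2 : |1/(a*p) - I| ≤ C1/p^2 := by rw [abs_sub_comm]; exact hIclose
    calc |1 - a*p*I| = a*p*|1/(a*p) - I| := h1
      _ ≤ a*p*(C1/p^2) := mul_le_mul_of_nonneg_left h2 hap.le
      _ ≤ 2*a^2*C1*I := by
          have h3 : 2*a^2*C1*(1/(2*(a*p))) ≤ 2*a^2*C1*I :=
            mul_le_mul_of_nonneg_left hIlow (by positivity)
          have h4 : a*p*(C1/p^2) = 2*a^2*C1*(1/(2*(a*p))) := by field_simp
          linarith
  have hγη : ∀ z, K.γη η z = I⁻¹ * K.γ z ^ p := by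
    intro z; rw [Kernel.γη, Kernel.c, ← hp_def, hI_def]
  have hγηint : IntegrableOn (fun z => K.γη η z) (Ioi (0:ℝ)) :=
    (hint_rpow.const_mul I⁻¹).congr (Filter.Eventually.of_forall fun z => (hγη z).symm)
  have hintL : IntegrableOn (fun z => |K.γη η z - a*p*Real.exp (-(a*p*z))|) (Ioi (0:ℝ)) :=
    (hγηint.sub (hint_exp.const_mul (a*p))).abs
  -- L¹ distance between the scaled kernel and the exponential surrogate
  have hD : (∫ z in Ioi (0:ℝ), |K.γη η z - a*p*Real.exp (-(a*p*z))|) ≤ 4*a*C1*η := by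
    have hptw : ∀ z, |K.γη η z - a*p*Real.exp (-(a*p*z))|
        ≤ I⁻¹*|K.γ z ^ p - Real.exp (-(a*p*z))| + |I⁻¹ - a*p| *  Real.exp (-(a*p*z)) := by
      intro z
      rw [hγη]
      rw [show I⁻¹ * K.γ z ^ p - a*p*Real.exp (-(a*p*z))
        = I⁻¹*(K.γ z ^ p - Real.exp (-(a*p*z))) + (I⁻¹ - a*p)*Real.exp (-(a*p*z)) by ring]
      refine le_trans (abs_add_le _ _) ?_
      rw [abs_mul, abs_mul, abs_of_pos (inv_pos.2 hIpos), abs_of_pos (Real.exp_pos _)]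
    have hint1 : IntegrableOn (fun z => I⁻¹*|K.γ z ^ p - Real.exp (-(a*p*z))|) (Ioi (0:ℝ)) :=
      (hint_rpow.sub hint_exp).abs.const_mul _
    have hint2 : IntegrableOn (fun z => |I⁻¹ - a*p| *  Real.exp (-(a*p*z))) (Ioi (0:ℝ)) :=
      hint_exp.const_mul _
    calc (∫ z in Ioi (0:ℝ), |K.γη η z - a*p*Real.exp (-(a*p*z))|)
        ≤ ∫ z in Ioi (0:ℝ), (I⁻¹*|K.γ z ^ p - Real.exp (-(a*p*z))|
            + |I⁻¹ - a*p| *  Real.exp (-(a*p*z))) :=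
          integral_mono_ae hintL (hint1.add hint2) (Filter.Eventually.of_forall hptw)
      _ = I⁻¹ * (∫ z in Ioi (0:ℝ), |K.γ z ^ p - Real.exp (-(a*p*z))|)
            + |I⁻¹ - a*p| * (∫ z in Ioi (0:ℝ), Real.exp (-(a*p*z))) := by
          rw [integral_add hint1 hint2, MeasureTheory.integral_const_mul,
            MeasureTheory.integral_const_mul]
      _ ≤ I⁻¹*(C1/p^2) + |I⁻¹ - a*p| * (1/(a*p)) := by
          rw [hIe]
          exact add_le_add (mul_le_mul_of_nonneg_left hJ (inv_pos.2 hIpos).le) le_rfl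
      _ ≤ 2*(a*p)*(C1/p^2) + (2*a^2*C1)*(1/(a*p)) :=
          add_le_add (mul_le_mul_of_nonneg_right hIinv (by positivity))
            (mul_le_mul_of_nonneg_right hIdiff (by positivity))
      _ = 4*a*C1*η := by rw [hηp]; field_simp; ring
  -- rewrite the surrogate operator
  have hd0 : K.dγ 0 ≠ 0 := ne_of_lt K.dγ0_neg
  have hν : (1:ℝ)/(-η/K.dγ 0) = a*p := by
    rw [ha_def, hp_def]
    field_simp
  have hEop : Eop (-η / K.dγ 0) q x
      = ∫ y in Ioi x, a*p*(Real.exp (-(a*p*(y-x))) * q y) := by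
    rw [Eop, ← MeasureTheory.integral_const_mul]
    refine setIntegral_congr_fun measurableSet_Ioi (fun y hy => ?_)
    rw [show (x - y)/(-η/K.dγ 0) = -(a*p*(y-x)) from by
      rw [div_eq_mul_one_div, hν]; ring, hν]
  have hq2M : ∀ y, |q y| ≤ 2*M := fun y => by
    have h := hqb y
    rw [abs_of_nonneg h.1]; exact h.2
  have hqm : AEStronglyMeasurable q (volume.restrict (Ioi x)) := hq.aestronglyMeasurable
  have hWint : IntegrableOn (fun y => K.γη η (y-x) * q y) (Ioi x) := by
    have h1 := Integrable.bdd_mul (c := 2*M) (shift_integrableOn hγηint x) hqm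
      (Filter.Eventually.of_forall fun y => by rw [Real.norm_eq_abs]; exact hq2M y)
    exact h1.congr (Filter.Eventually.of_forall fun y => mul_comm _ _)
  have hEint : IntegrableOn (fun y => a*p*(Real.exp (-(a*p*(y-x))) * q y)) (Ioi x) := by
    have h0 : IntegrableOn (fun y => Real.exp (-(a*p*(y-x)))) (Ioi x) :=
      shift_integrableOn hint_exp x
    have h1 := Integrable.bdd_mul (c := 2*M) h0 hqm (Filter.Eventually.of_forall fun y => by rw [Real.norm_eq_abs]; exact hq2M y)
    have h2 := h1.congr (Filter.Eventually.of_forall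
      (fun y => mul_comm (q y) (Real.exp (-(a*p*(y-x))))))
    exact h2.const_mul (a*p)
  have hintabs : IntegrableOn
      (fun y => |K.γη η (y-x) - a*p*Real.exp (-(a*p*(y-x)))|) (Ioi x) :=
    shift_integrableOn hintL x
  rw [Wop, hEop, ← integral_sub hWint hEint]
  have habs : |∫ y in Ioi x, (K.γη η (y-x) * q y - a*p*(Real.exp (-(a*p*(y-x))) * q y))|
      ≤ ∫ y in Ioi x, |K.γη η (y-x) * q y - a*p*(Real.exp (-(a*p*(y-x))) * q y)| := by
    have h := norm_integral_le_integral_norm (μ := volume.restrict (Ioi x))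
      (f := fun y => K.γη η (y-x) * q y - a*p*(Real.exp (-(a*p*(y-x))) * q y))
    simpa [Real.norm_eq_abs] using h
  refine le_trans habs ?_
  have hptw2 : ∀ y ∈ Ioi x, |K.γη η (y-x) * q y - a*p*(Real.exp (-(a*p*(y-x))) * q y)|
      ≤ |K.γη η (y-x) - a*p*Real.exp (-(a*p*(y-x)))| * (2*M) := by
    intro y hy
    rw [show K.γη η (y-x) * q y - a*p*(Real.exp (-(a*p*(y-x))) * q y)
      = (K.γη η (y-x) - a*p*Real.exp (-(a*p*(y-x)))) * q y by ring, abs_mul]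
    exact mul_le_mul_of_nonneg_left (hq2M y) (abs_nonneg _)
  calc (∫ y in Ioi x, |K.γη η (y-x) * q y - a*p*(Real.exp (-(a*p*(y-x))) * q y)|)
      ≤ ∫ y in Ioi x, |K.γη η (y-x) - a*p*Real.exp (-(a*p*(y-x)))| * (2*M) :=
        setIntegral_mono_on ((hWint.sub hEint).abs) (hintabs.mul_const _)
          measurableSet_Ioi hptw2
    _ = (∫ y in Ioi x, |K.γη η (y-x) - a*p*Real.exp (-(a*p*(y-x)))|) * (2*M) :=
        MeasureTheory.integral_mul_const _ _
    _ = (∫ z in Ioi (0:ℝ), |K.γη η z - a*p*Real.exp (-(a*p*z))|) * (2*M) := by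
        rw [shift_integral (fun z => |K.γη η z - a*p*Real.exp (-(a*p*z))|) x]
    _ ≤ (4*a*C1*η) * (2*M) :=
        mul_le_mul_of_nonneg_right hD (by positivity)
    _ = 8*a*C1 * η * M := by ring
end

section
/- Let f : ℝ → ℝ be twice differentiable with |f''(x)| ≤ K for all x ∈ ℝ, let c ≥ 0, and suppose x₀ ∈ ℝ satisfies f(x₀) ≥ f(y) − c for all y ∈ ℝ (i.e. x₀ is a near-maximizer up to error c). Then f'(x₀)² ≤ 2 c K. -/
/-- Lipschitz bound on `f'` from the second-derivative bound. -/
lemma aux_lip (f' f'' : ℝ → ℝ) (K : ℝ) (hK : 0 ≤ K)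
    (hf' : ∀ x, HasDerivAt f' (f'' x) x) (hf'' : ∀ x, |f'' x| ≤ K) :
    ∀ a b : ℝ, |f' a - f' b| ≤ K * |a - b| := by
  have hlip : LipschitzWith K.toNNReal f' := by
    apply lipschitzWith_of_nnnorm_deriv_le (fun x => (hf' x).differentiableAt)
    intro x
    rw [(hf' x).deriv]
    have : ‖f'' x‖ ≤ K := hf'' x
    simpa [← NNReal.coe_le_coe, Real.coe_toNNReal K hK] using this
  intro a b
  have := hlip.dist_le_mul a b
  simpa [Real.dist_eq, Real.coe_toNNReal K hK] using this

lemma aux_taylor (f f' f'' : ℝ → ℝ) (K : ℝ) (hK : 0 ≤ K)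
    (hf : ∀ x, HasDerivAt f (f' x) x) (hf' : ∀ x, HasDerivAt f' (f'' x) x)
    (hf'' : ∀ x, |f'' x| ≤ K) (x₀ t : ℝ) :
    f x₀ + t * f' x₀ - K * t ^ 2 / 2 ≤ f (x₀ + t) := by
  have hlip := aux_lip f' f'' K hK hf' hf''
  set h : ℝ → ℝ := fun s => f (x₀ + s) - f x₀ - s * f' x₀ + K * s ^ 2 / 2 with hh
  have hderiv : ∀ s, HasDerivAt h (f' (x₀ + s) - f' x₀ + K * s) s := by
    intro s
    have h1 : HasDerivAt (fun s : ℝ => f (x₀ + s)) (f' (x₀ + s)) s := by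
      have := (hf (x₀ + s)).comp s ((hasDerivAt_id s).const_add x₀)
      rw [mul_one] at this
      exact this
    have h2 := (((h1.sub (hasDerivAt_const s (f x₀))).sub
        ((hasDerivAt_id s).mul_const (f' x₀))).add
        (((hasDerivAt_pow 2 s).const_mul K).div_const 2))
    refine h2.congr_deriv ?_
    push_cast
    ring
  have hcont : Continuous h := by
    have : Differentiable ℝ h := fun s => (hderiv s).differentiableAt
    exact this.continuous
  have key : 0 ≤ h t := by
    rcases le_total 0 t with ht | ht
    · have hmono : MonotoneOn h (Set.Icc 0 t) := by
        apply monotoneOn_of_deriv_nonneg (convex_Icc 0 t) hcont.continuousOn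
        · intro s hs
          exact (hderiv s).differentiableAt.differentiableWithinAt
        · intro s hs
          rw [interior_Icc] at hs
          rw [(hderiv s).deriv]
          have hb := hlip (x₀ + s) x₀
          have : |f' (x₀ + s) - f' x₀| ≤ K * s := by
            have hs0 : (0:ℝ) ≤ s := le_of_lt hs.1
            simpa [abs_of_nonneg hs0] using hb
          have := abs_le.mp this
          linarith [this.1]
      have := hmono (Set.left_mem_Icc.mpr ht) (Set.right_mem_Icc.mpr ht) ht
      simpa [hh] using this
    · have hanti : AntitoneOn h (Set.Icc t 0) := by
        apply antitoneOn_of_deriv_nonpos (convex_Icc t 0) hcont.continuousOn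
        · intro s hs
          exact (hderiv s).differentiableAt.differentiableWithinAt
        · intro s hs
          rw [interior_Icc] at hs
          rw [(hderiv s).deriv]
          have hb := hlip (x₀ + s) x₀
          have : |f' (x₀ + s) - f' x₀| ≤ K * (-s) := by
            have hs0 : s ≤ 0 := le_of_lt hs.2
            simpa [abs_of_nonpos hs0] using hb
          have := abs_le.mp this
          linarith [this.2]
      have := hanti (Set.left_mem_Icc.mpr ht) (Set.right_mem_Icc.mpr ht) ht
      simpa [hh] using this
  simp only [hh] at key
  linarith

/-- near-maximizer gradient estimate: let `f : ℝ → ℝ` be twice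
differentiable with `|f''| ≤ K` on `ℝ`, let `c ≥ 0`, and suppose `x₀` satisfies
`f(x₀) ≥ f(y) - c` for all `y` (a near-maximizer up to error `c`). Then
`f'(x₀)² ≤ 2 c K`. -/
theorem near_maximizer_gradient_estimate
    (f f' f'' : ℝ → ℝ) (K c : ℝ) (hK : 0 ≤ K) (hc : 0 ≤ c)
    (hf : ∀ x, HasDerivAt f (f' x) x) (hf' : ∀ x, HasDerivAt f' (f'' x) x)
    (hf'' : ∀ x, |f'' x| ≤ K)
    (x₀ : ℝ) (hmax : ∀ y, f x₀ ≥ f y - c) :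
    f' x₀ ^ 2 ≤ 2 * c * K := by
  have key : ∀ t : ℝ, t * f' x₀ ≤ c + K * t ^ 2 / 2 := by
    intro t
    have h1 := aux_taylor f f' f'' K hK hf hf' hf'' x₀ t
    have h2 := hmax (x₀ + t)
    linarith
  rcases eq_or_lt_of_le hK with hK0 | hK0
  · -- K = 0 : show f' x₀ = 0
    have ha : f' x₀ = 0 := by
      by_contra ha
      have := key ((c + 1) / f' x₀)
      rw [← hK0] at this
      have hx : (c + 1) / f' x₀ * f' x₀ = (c+1) * ((f' x₀)⁻¹ * f' x₀) := by ring
      rw [hx, inv_mul_cancel₀ ha] at this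
      linarith
    rw [ha]
    norm_num
    positivity
  · have := key (f' x₀ / K)
    have hKne : K ≠ 0 := ne_of_gt hK0
    have h1 : f' x₀ / K * f' x₀ = f' x₀ ^ 2 / K := by ring
    have h2 : K * (f' x₀ / K) ^ 2 / 2 = f' x₀ ^ 2 / (2 * K) := by
      field_simp
    rw [h1, h2] at this
    have he : f' x₀ ^ 2 / K = 2 * (f' x₀ ^ 2 / (2 * K)) := by
      field_simp
    have h3 : f' x₀ ^ 2 / (2 * K) ≤ c := by linarith
    have := (div_le_iff₀ (by positivity : (0:ℝ) < 2 * K)).mp h3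
    linarith
end

section
/- For every r ∈ [0,1), lim_{η→0⁺} (c_η/η) · r^{(1−η)/η} = 0; in particular, for any Lipschitz constant L ≥ 0 and TV bound M ≥ 0 the quantity C_η := L · (c_η/η) · r^{(1−η)/η} · M tends to 0 as η → 0⁺. -/
open MeasureTheory Real Set Filter Topology

private lemma aux_tendsto_crux {t : ℝ} (ht0 : 0 < t) (ht1 : t < 1) :
    Filter.Tendsto (fun η : ℝ => η⁻¹ * t ^ η⁻¹) (𝓝[>] (0:ℝ)) (𝓝 0) := by
  have hb : 0 < -Real.log t := by
    have := Real.log_neg ht0 ht1; linarith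
  have h1 : Tendsto (fun x : ℝ => x * Real.exp (-x)) atTop (𝓝 0) := by
    simpa using tendsto_pow_mul_exp_neg_atTop_nhds_zero 1
  have h2 : Tendsto (fun x : ℝ => (-Real.log t * x) * Real.exp (-(-Real.log t * x)))
      atTop (𝓝 0) := h1.comp (tendsto_id.const_mul_atTop hb)
  have h3 : Tendsto (fun x : ℝ => x * t ^ x) atTop (𝓝 0) := by
    have h4 := h2.const_mul (-Real.log t)⁻¹
    rw [mul_zero] at h4
    refine h4.congr fun x => ?_
    rw [Real.rpow_def_of_pos ht0]
    have he : Real.exp (-(-Real.log t * x)) = Real.exp (Real.log t * x) := by ring_nf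
    rw [he, ← mul_assoc, ← mul_assoc, inv_mul_cancel₀ hb.ne', one_mul]
  exact h3.comp tendsto_inv_nhdsGT_zero

/-- for every `r ∈ [0,1)`, `lim_{η→0⁺} (c_η/η)·r^{(1-η)/η} = 0`; in
particular, for any Lipschitz constant `L ≥ 0` and TV bound `M ≥ 0`, the quantity
`C_η = L·(c_η/η)·r^{(1-η)/η}·M` tends to `0` as `η → 0⁺`. -/
theorem c_eta_tail_decay (K : Kernel) (r : ℝ) (hr : r ∈ Set.Ico (0:ℝ) 1) :
    Filter.Tendsto (fun η : ℝ => (K.c η / η) * r ^ ((1 - η)/η))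
      (nhdsWithin 0 (Set.Ioi 0)) (nhds 0) ∧
    ∀ L M : ℝ, 0 ≤ L → 0 ≤ M →
      Filter.Tendsto (fun η : ℝ => L * (K.c η / η) * r ^ ((1 - η)/η) * M)
        (nhdsWithin 0 (Set.Ioi 0)) (nhds 0) := by
  obtain ⟨hr0, hr1⟩ := hr
  have main : Filter.Tendsto (fun η : ℝ => (K.c η / η) * r ^ ((1 - η)/η))
      (nhdsWithin 0 (Set.Ioi 0)) (nhds 0) := by
    rcases eq_or_lt_of_le hr0 with h0 | hrpos
    · have hev : (fun _ : ℝ => (0:ℝ)) =ᶠ[𝓝[>] (0:ℝ)]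
          (fun η : ℝ => (K.c η / η) * r ^ ((1 - η)/η)) := by
        filter_upwards [Ioo_mem_nhdsGT_of_mem (Set.left_mem_Ico.2 one_pos)] with η hη
        rw [← h0, Real.zero_rpow (div_ne_zero (by linarith [hη.2]) hη.1.ne'), mul_zero]
      exact Filter.Tendsto.congr' hev tendsto_const_nhds
    · set s : ℝ := (1 + r)/2 with hs
      have hrs : r < s := by rw [hs]; linarith
      have hs1 : s < 1 := by rw [hs]; linarith
      have hs0 : 0 < s := lt_trans hrpos hrs
      have h0mem : (0:ℝ) ∈ Set.Ico (0:ℝ) K.δ := ⟨le_rfl, K.δ_pos⟩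
      have hc0 : ContinuousWithinAt K.γ (Set.Ici 0) 0 :=
        (K.deriv_Ico 0 h0mem).continuousWithinAt
      have hev1 : {x : ℝ | s < K.γ x} ∈ 𝓝[≥] (0:ℝ) := by
        have hlt : s < K.γ 0 := by rw [K.γ0]; exact hs1
        exact hc0.eventually (eventually_gt_nhds hlt)
      obtain ⟨b, hb_mem, hbsub⟩ := mem_nhdsGE_iff_exists_Ico_subset.1 hev1
      have hbpos : 0 < b := hb_mem
      have hco : ContinuousOn K.γ (Set.Ico 0 K.δ) := fun x hx =>
        ((K.deriv_Ico x hx).continuousWithinAt).mono Set.Ico_subset_Ici_self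
      have hanti : AntitoneOn K.γ (Set.Ico 0 K.δ) := by
        refine antitoneOn_of_hasDerivWithinAt_nonpos (f' := K.dγ) (convex_Ico 0 K.δ) hco ?_ ?_
        · rw [interior_Ico]
          exact fun x hx => (K.deriv_Ico x ⟨hx.1.le, hx.2⟩).mono
            (Set.Ioo_subset_Ioi_self.trans Set.Ioi_subset_Ici_self)
        · rw [interior_Ico]; exact fun x hx => (K.dγ_neg x hx).le
      have hγle1 : ∀ x : ℝ, 0 < x → x ≠ K.δ → K.γ x ≤ 1 := by
        intro x hx hxδ
        rcases lt_or_gt_of_ne hxδ with h | h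
        · have := hanti h0mem ⟨hx.le, h⟩ hx.le
          rwa [K.γ0] at this
        · have h2 : K.γ x ≤ K.γ (K.δ/2) :=
            K.upper (K.δ/2) ⟨half_pos K.δ_pos, half_lt_self K.δ_pos⟩ x h
          have h3 : K.γ (K.δ/2) ≤ K.γ 0 :=
            hanti h0mem ⟨(half_pos K.δ_pos).le, half_lt_self K.δ_pos⟩ (half_pos K.δ_pos).le
          rw [K.γ0] at h3; linarith
      have hane : ∀ᵐ x : ℝ, x ≠ K.δ := by
        rw [ae_iff]
        simp only [not_not, Set.setOf_eq_eq_singleton]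
        exact Real.volume_singleton
      set t : ℝ := r / s with htdef
      have ht0 : 0 < t := div_pos hrpos hs0
      have ht1 : t < 1 := (div_lt_one hs0).2 hrs
      have hg : Filter.Tendsto (fun η : ℝ => (b⁻¹ * r⁻¹) * (η⁻¹ * t ^ η⁻¹))
          (𝓝[>] (0:ℝ)) (𝓝 0) := by
        have h := (aux_tendsto_crux ht0 ht1).const_mul (b⁻¹ * r⁻¹)
        rwa [mul_zero] at h
      have hkey : ∀ η ∈ Set.Ioo (0:ℝ) 1,
          0 ≤ K.c η ∧ K.c η ≤ (b * s ^ (1/η))⁻¹ := by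
        intro η hη
        have hη0 : 0 < η := hη.1
        have hp0 : 0 < 1/η := by positivity
        have hp1 : (1:ℝ) ≤ 1/η := by
          rw [le_div_iff₀ hη0]; linarith [hη.2]
        have hmeas : MeasureTheory.AEStronglyMeasurable (fun y => K.γ y ^ (1/η))
            (MeasureTheory.volume.restrict (Set.Ioi (0:ℝ))) :=
          (Real.continuous_rpow_const hp0.le).comp_aestronglyMeasurable
            K.integrable.aestronglyMeasurable
        have hint : MeasureTheory.IntegrableOn (fun y => K.γ y ^ (1/η)) (Set.Ioi 0) := by
          refine K.integrable.mono' hmeas ?_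
          filter_upwards [MeasureTheory.ae_restrict_of_ae hane,
            MeasureTheory.ae_restrict_mem measurableSet_Ioi] with x hxδ hx
          have hx0 : (0:ℝ) < x := hx
          have hnn : 0 ≤ K.γ x ^ (1/η) := Real.rpow_nonneg (K.nonneg x hx0.le) _
          rw [Real.norm_eq_abs, abs_of_nonneg hnn]
          rcases eq_or_lt_of_le (K.nonneg x hx0.le) with h | h
          · rw [← h, Real.zero_rpow hp0.ne']
          · calc K.γ x ^ (1/η) ≤ K.γ x ^ (1:ℝ) :=
                Real.rpow_le_rpow_of_exponent_ge h (hγle1 x hx0 hxδ) hp1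
              _ = K.γ x := Real.rpow_one _
        have hnnae : 0 ≤ᵐ[MeasureTheory.volume.restrict (Set.Ioi (0:ℝ))]
            (fun y => K.γ y ^ (1/η)) := by
          filter_upwards [MeasureTheory.ae_restrict_mem measurableSet_Ioi] with x hx
          exact Real.rpow_nonneg (K.nonneg x (le_of_lt hx)) _
        have hlow : b * s ^ (1/η) ≤ ∫ y in Set.Ioi (0:ℝ), K.γ y ^ (1/η) := by
          have e1 : ∫ _ in Set.Ioo (0:ℝ) b, s ^ (1/η) = b * s ^ (1/η) := by
            rw [MeasureTheory.setIntegral_const, measureReal_def, Real.volume_Ioo, smul_eq_mul, sub_zero,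
              ENNReal.toReal_ofReal hbpos.le]
          calc b * s ^ (1/η) = ∫ _ in Set.Ioo (0:ℝ) b, s ^ (1/η) := e1.symm
            _ ≤ ∫ y in Set.Ioo (0:ℝ) b, K.γ y ^ (1/η) := by
                refine MeasureTheory.setIntegral_mono_on
                  (MeasureTheory.integrableOn_const (ne_of_lt ?_))
                  (hint.mono_set Set.Ioo_subset_Ioi_self) measurableSet_Ioo ?_
                · rw [Real.volume_Ioo]; exact ENNReal.ofReal_lt_top
                · intro x hx
                  exact Real.rpow_le_rpow hs0.le (hbsub ⟨hx.1.le, hx.2⟩).le hp0.le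
            _ ≤ ∫ y in Set.Ioi (0:ℝ), K.γ y ^ (1/η) :=
                MeasureTheory.setIntegral_mono_set hint hnnae
                  (HasSubset.Subset.eventuallyLE Set.Ioo_subset_Ioi_self)
        have hIpos : 0 < ∫ y in Set.Ioi (0:ℝ), K.γ y ^ (1/η) :=
          lt_of_lt_of_le (by positivity) hlow
        constructor
        · exact inv_nonneg.2 hIpos.le
        · exact inv_anti₀ (by positivity) hlow
      refine squeeze_zero' ?_ ?_ hg
      · filter_upwards [Ioo_mem_nhdsGT_of_mem (Set.left_mem_Ico.2 one_pos)] with η hη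
        exact mul_nonneg (div_nonneg (hkey η hη).1 hη.1.le) (Real.rpow_nonneg hr0 _)
      · filter_upwards [Ioo_mem_nhdsGT_of_mem (Set.left_mem_Ico.2 one_pos)] with η hη
        obtain ⟨hc0', hcle⟩ := hkey η hη
        have hη0 : 0 < η := hη.1
        have hspos : 0 < s ^ (1/η) := Real.rpow_pos_of_pos hs0 _
        have hrpow : r ^ ((1-η)/η) = (t ^ η⁻¹ * s ^ (1/η)) * r⁻¹ := by
          have he : (1-η)/η = 1/η - 1 := by field_simp
          rw [he, Real.rpow_sub hrpos, Real.rpow_one, div_eq_mul_inv]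
          congr 1
          have hrts : r = t * s := by rw [htdef]; field_simp
          rw [one_div]
          conv_lhs => rw [hrts]
          exact Real.mul_rpow ht0.le hs0.le
        calc K.c η / η * r ^ ((1-η)/η)
            ≤ (b * s ^ (1/η))⁻¹ / η * r ^ ((1-η)/η) := by
              gcongr
          _ = (b⁻¹ * r⁻¹) * (η⁻¹ * t ^ η⁻¹) := by
              rw [hrpow, mul_inv, div_eq_mul_inv]
              field_simp
  refine ⟨main, fun L M hL hM => ?_⟩
  have h := main.const_mul (L * M)
  rw [mul_zero] at h
  exact h.congr fun η => by ring
end
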